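/- arXiv:2507.06498 — 7 statements merged into one kernel-verified Lean document; each statement's English description precedes it below -/
import Mathlib

section
/- Let 0 < ε < π/2, let α, β > 0 be real numbers, and let λ ∈ ℂ \ {0} satisfy |arg λ| ≤ π − ε. Then |αλ + β| ≥ sin(ε/2)·(α|λ| + β). -/
open Complex Real

noncomputable section

/-- The sector `Σ_ε = {λ ∈ ℂ \ {0} : |arg λ| ≤ π − ε}`. -/
def SigmaSec (ε : ℝ) : Set ℂ := {z : ℂ | z ≠ 0 ∧ |z.arg| ≤ π - ε}

/-- For `0 < ε < π/2`, `α, β > 0` and `λ ∈ Σ_ε` one has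
`|αλ + β| ≥ sin(ε/2)·(α|λ| + β)`. -/
theorem statement0 (ε α β : ℝ) (hε0 : 0 < ε) (hεπ : ε < π / 2)
    (hα : 0 < α) (hβ : 0 < β) (z : ℂ) (hz : z ∈ SigmaSec ε) :
    Real.sin (ε / 2) * (α * ‖z‖ + β) ≤ ‖(α : ℂ) * z + (β : ℂ)‖ := by
  obtain ⟨hz0, harg⟩ := hz
  have hπ : (0:ℝ) < π := Real.pi_pos
  have haz : 0 < ‖z‖ := by simpa using (norm_pos_iff.mpr hz0)
  -- Re z ≥ -|z| cos ε
  have hcosarg : Real.cos (π - ε) ≤ Real.cos z.arg := by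
    rw [← Real.cos_abs z.arg]
    apply Real.cos_le_cos_of_nonneg_of_le_pi (abs_nonneg _) (by linarith) harg
  have hre0 : z.re = ‖z‖ * Real.cos z.arg := by
    rw [Complex.cos_arg hz0]; field_simp
  have hre : -(‖z‖ * Real.cos ε) ≤ z.re := by
    rw [hre0]
    have := mul_le_mul_of_nonneg_left hcosarg haz.le
    simpa [Real.cos_pi_sub] using this
  -- sin(ε/2) facts
  have hs0 : 0 ≤ Real.sin (ε / 2) := Real.sin_nonneg_of_nonneg_of_le_pi (by linarith) (by linarith)
  have hssq : Real.sin (ε / 2) ^ 2 = (1 - Real.cos ε) / 2 := by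
    have h := Real.sin_sq_eq_half_sub (ε/2)
    rw [show 2*(ε/2) = ε by ring] at h
    linarith
  have hcos1 : Real.cos ε ≤ 1 := Real.cos_le_one ε
  have hcosm : -1 ≤ Real.cos ε := Real.neg_one_le_cos ε
  -- squares
  have hLnn : 0 ≤ Real.sin (ε / 2) * (α * ‖z‖ + β) := by positivity
  have key : (Real.sin (ε / 2) * (α * ‖z‖ + β))^2 ≤
      (‖(α : ℂ) * z + (β : ℂ)‖)^2 := by
    rw [Complex.sq_norm, Complex.normSq_apply]
    simp only [Complex.add_re, Complex.add_im, Complex.mul_re, Complex.mul_im,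
      Complex.ofReal_re, Complex.ofReal_im]
    have habs := Complex.sq_norm z
    rw [Complex.normSq_apply] at habs
    have habs2 : α^2 * ‖z‖^2 = α^2*z.re^2 + α^2*z.im^2 := by
      linear_combination α^2 * habs
    rw [mul_pow, hssq]
    nlinarith [habs2, mul_nonneg (by linarith : (0:ℝ) ≤ 1 + Real.cos ε) (sq_nonneg (α * ‖z‖ - β)),
      mul_le_mul_of_nonneg_left hre (by positivity : (0:ℝ) ≤ 2*α*β)]
  calc Real.sin (ε / 2) * (α * ‖z‖ + β)
      = Real.sqrt ((Real.sin (ε / 2) * (α * ‖z‖ + β))^2) := (Real.sqrt_sq hLnn).symm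
    _ ≤ Real.sqrt ((‖(α : ℂ) * z + (β : ℂ)‖)^2) := Real.sqrt_le_sqrt key
    _ = _ := Real.sqrt_sq (norm_nonneg _)

end
end

section
/- Let 0 < ε < π/2, s ≥ 1, and let μ+, ν+, γ1+, γ2+, λ0 be positive constants. Then there exists ε′ ∈ (0, π/2), depending only on s, μ+, ν+, γ1+, γ2+, λ0 and ε, such that for every λ ∈ Γ_{ε,λ0}, setting δ = γ1+γ2+ λ⁻¹, one has sμ+ + ν+ + δ ≠ 0 and (sμ+ + ν+ + δ)⁻¹ λ ∈ Σ_{ε′}. -/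
set_option maxHeartbeats 1000000


open Complex Real

noncomputable section

/-- The truncated sector `Σ_{ε,λ0}`. -/
def SigmaSecTr (ε lam0 : ℝ) : Set ℂ := {z ∈ SigmaSec ε | lam0 ≤ ‖z‖}

/-- The region `K_ε` associated with constants `γ1, γ2, ν`. -/
def Kreg (ε γ1 γ2 ν : ℝ) : Set ℂ :=
  {z : ℂ | (γ1 * γ2 / ν + ε) ^ 2 ≤ (z.re + γ1 * γ2 / ν + ε) ^ 2 + z.im ^ 2}

/-- The region `Γ_{ε,λ0} = Σ_{ε,λ0} ∩ K_ε` (case (C1)). -/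
def GammaReg (ε lam0 γ1 γ2 ν : ℝ) : Set ℂ := SigmaSecTr ε lam0 ∩ Kreg ε γ1 γ2 ν

/-- There exists `ε′ ∈ (0,π/2)` such that for every `λ ∈ Γ_{ε,λ0}`,
with `δ = γ1+γ2+ λ⁻¹`, one has `sμ+ + ν+ + δ ≠ 0` and `(sμ+ + ν+ + δ)⁻¹ λ ∈ Σ_{ε′}`. -/
theorem statement1 (ε s μp νp γ1p γ2p lam0 : ℝ)
    (hε0 : 0 < ε) (hεπ : ε < π / 2) (hs : 1 ≤ s)
    (hμ : 0 < μp) (hν : 0 < νp) (hγ1 : 0 < γ1p) (hγ2 : 0 < γ2p) (hl0 : 0 < lam0) :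
    ∃ ε' : ℝ, 0 < ε' ∧ ε' < π / 2 ∧
      ∀ lam ∈ GammaReg ε lam0 γ1p γ2p νp,
        ((s * μp + νp : ℝ) : ℂ) + ((γ1p * γ2p : ℝ) : ℂ) * lam⁻¹ ≠ 0 ∧
        (((s * μp + νp : ℝ) : ℂ) + ((γ1p * γ2p : ℝ) : ℂ) * lam⁻¹)⁻¹ * lam ∈ SigmaSec ε' := by
  have hπ : (0:ℝ) < π := Real.pi_pos
  set c := s * μp + νp with hcdef
  set g := γ1p * γ2p with hgdef
  have hc0 : 0 < c := by rw [hcdef]; nlinarith only [hs, hμ, hν]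
  have hg0 : 0 < g := mul_pos hγ1 hγ2
  have hcν : νp < c := by rw [hcdef]; nlinarith only [hs, hμ, hν]
  set d := g / νp + ε with hddef
  have hd0 : 0 < d := by positivity
  have hgd : d * νp = g + ε * νp := by rw [hddef]; field_simp
  set κ := νp * ε / d with hκdef
  have hκ0 : 0 < κ := by positivity
  have hκd : κ * d = νp * ε := by rw [hκdef]; field_simp
  have hsε : 0 < Real.sin ε := Real.sin_pos_of_pos_of_lt_pi hε0 (by linarith)
  have hcε : 0 < Real.cos ε := Real.cos_pos_of_mem_Ioo ⟨by linarith, hεπ⟩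
  set t1 := c * lam0 / g with ht1def
  set t2 := Real.sin ε * c * lam0 / (2 * (c * lam0 + g)) with ht2def
  set t3 := Real.sin ε * κ * lam0 ^ 2 * c / (c ^ 2 * lam0 ^ 2 + 4 * g ^ 2) with ht3def
  have ht10 : 0 < t1 := by positivity
  have ht20 : 0 < t2 := by positivity
  have ht30 : 0 < t3 := by positivity
  have ht1g : t1 * g = c * lam0 := by rw [ht1def]; field_simp
  have ht2g : t2 * (2 * (c * lam0 + g)) = Real.sin ε * c * lam0 := by
    rw [ht2def]; field_simp
  have ht3g : t3 * (c ^ 2 * lam0 ^ 2 + 4 * g ^ 2) = Real.sin ε * κ * lam0 ^ 2 * c := by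
    rw [ht3def]; field_simp
  set t := min t1 (min t2 t3) with htdef
  have ht0 : 0 < t := lt_min ht10 (lt_min ht20 ht30)
  set s0 := t / (1 + t) with hs0def
  have hs00 : 0 < s0 := by positivity
  have hs01 : s0 < 1 := by
    rw [hs0def, div_lt_one (by linarith)]; linarith
  have hs0t : s0 * (1 + t) = t := by
    rw [hs0def]; field_simp
  refine ⟨Real.arcsin s0, Real.arcsin_pos.2 hs00, Real.arcsin_lt_pi_div_two.2 hs01, ?_⟩
  intro lam hlam
  obtain ⟨⟨⟨hne, harg⟩, habs⟩, hK⟩ := hlam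
  simp only [Kreg, Set.mem_setOf_eq] at hK
  set x := lam.re with hxdef
  set y := lam.im with hydef
  set R := ‖lam‖ with hRdef
  have hR0 : 0 < R := norm_pos_iff.mpr hne
  have hRl : lam0 ≤ R := habs
  have hr2xy : Complex.normSq lam = x ^ 2 + y ^ 2 := by
    rw [Complex.normSq_apply, ← hxdef, ← hydef]; ring
  have hr20 : 0 < x ^ 2 + y ^ 2 := by rw [← hr2xy]; exact Complex.normSq_pos.2 hne
  have hR2 : R ^ 2 = x ^ 2 + y ^ 2 := by rw [hRdef, Complex.sq_norm, hr2xy]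
  have hKx : 0 ≤ x ^ 2 + y ^ 2 + 2 * d * x := by
    rw [hddef]; nlinarith only [hK]
  -- the multiplier is nonzero
  set w := ((c : ℝ) : ℂ) + ((g : ℝ) : ℂ) * lam⁻¹ with hwdef
  have hwre : w.re = c + g * (x / (x ^ 2 + y ^ 2)) := by
    rw [hwdef]
    simp [Complex.add_re, Complex.mul_re, Complex.inv_re, Complex.inv_im, hr2xy,
      ← hxdef]
  have hgd2 : d * νp * (x ^ 2 + y ^ 2) = (g + ε * νp) * (x ^ 2 + y ^ 2) := by rw [hgd]
  have hcrgx : 0 < c * (x ^ 2 + y ^ 2) + g * x := by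
    nlinarith only [hgd2, hd0, mul_nonneg hg0.le hKx,
      mul_nonneg (mul_nonneg hd0.le (sub_nonneg.2 hcν.le)) hr20.le,
      mul_pos (mul_pos hε0 hν) hr20,
      mul_nonneg hg0.le (sq_nonneg x), mul_nonneg hg0.le (sq_nonneg y)]
  have hwrepos : 0 < w.re := by
    rw [hwre]
    have h2 : c + g * (x / (x ^ 2 + y ^ 2)) = (c * (x ^ 2 + y ^ 2) + g * x) / (x ^ 2 + y ^ 2) := by
      field_simp
    rw [h2]
    exact div_pos hcrgx hr20
  have hw0 : w ≠ 0 := by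
    intro h; rw [h] at hwrepos; simp at hwrepos
  have hz0 : w⁻¹ * lam ≠ 0 := mul_ne_zero (inv_ne_zero hw0) hne
  -- the auxiliary point v with the same argument
  set q := ((c : ℝ) : ℂ) * lam + ((g : ℝ) : ℂ) with hqdef
  have hqw : q = w * lam := by
    rw [hwdef, hqdef]; field_simp
  have hq0 : q ≠ 0 := by rw [hqw]; exact mul_ne_zero hw0 hne
  set v := lam ^ 2 * (starRingEnd ℂ) q with hvdef
  have hnsq : 0 < Complex.normSq q := Complex.normSq_pos.2 hq0
  have hId : ((Complex.normSq q : ℝ) : ℂ) * (w⁻¹ * lam) = v := by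
    rw [← Complex.mul_conj q, hvdef, hqw]
    field_simp
  have hargzv : (w⁻¹ * lam).arg = v.arg := by
    rw [← hId, Complex.arg_real_mul _ hnsq]
  have hvre : v.re = c * (x ^ 2 + y ^ 2) * x + g * (x ^ 2 - y ^ 2) := by
    rw [hvdef, hqdef]
    simp [Complex.mul_re, Complex.mul_im, pow_two, ← hxdef, ← hydef]
    ring
  have hvim : v.im = y * (c * (x ^ 2 + y ^ 2) + 2 * g * x) := by
    rw [hvdef, hqdef]
    simp [Complex.mul_re, Complex.mul_im, pow_two, ← hxdef, ← hydef]
    ring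
  set Y := |y| with hYdef
  have hY0 : 0 ≤ Y := abs_nonneg y
  have hY2 : Y ^ 2 = y ^ 2 := sq_abs y
  -- Y-normalized versions
  have hr20Y : 0 < x ^ 2 + Y ^ 2 := by rw [hY2]; exact hr20
  have hR2Y : R ^ 2 = x ^ 2 + Y ^ 2 := by rw [hY2]; exact hR2
  have hKxY : 0 ≤ x ^ 2 + Y ^ 2 + 2 * d * x := by rw [hY2]; exact hKx
  have hvreY : v.re = c * (x ^ 2 + Y ^ 2) * x + g * (x ^ 2 - Y ^ 2) := by
    rw [hY2]; exact hvre
  have hYR : Y ≤ R := by nlinarith only [hY2, hR2, hY0, hR0, sq_nonneg x]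
  have hgd2Y : d * νp * (x ^ 2 + Y ^ 2) = (g + ε * νp) * (x ^ 2 + Y ^ 2) := by rw [hgd]
  have hfaclb : (x ^ 2 + Y ^ 2) * κ ≤ c * (x ^ 2 + Y ^ 2) + 2 * g * x := by
    have key : d * (c * (x ^ 2 + Y ^ 2) + 2 * g * x) - d * ((x ^ 2 + Y ^ 2) * κ) =
        (x ^ 2 + Y ^ 2) * d * (c - νp) + g * (x ^ 2 + Y ^ 2 + 2 * d * x) := by
      linear_combination (x ^ 2 + Y ^ 2) * hgd - (x ^ 2 + Y ^ 2) * hκd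
    nlinarith only [key, mul_nonneg hg0.le hKxY,
      mul_nonneg (mul_nonneg hr20Y.le hd0.le) (sub_nonneg.2 hcν.le), hd0]
  have hF0 : 0 ≤ c * (x ^ 2 + Y ^ 2) + 2 * g * x := le_trans (by positivity) hfaclb
  have hvim_abs : |v.im| = Y * (c * (x ^ 2 + Y ^ 2) + 2 * g * x) := by
    rw [hvim, abs_mul, ← hYdef]
    congr 1
    rw [show (c * (x ^ 2 + y ^ 2) + 2 * g * x) = (c * (x ^ 2 + Y ^ 2) + 2 * g * x) by
      rw [hY2]]
    exact abs_of_nonneg hF0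
  -- main inequality
  have hineq : v.re < 0 → t * (-v.re) ≤ |v.im| := by
    intro hv
    have hvpos : (0:ℝ) ≤ -v.re := by linarith
    rcases le_or_gt 0 x with hx | hx
    · -- x ≥ 0
      have h1 : -v.re ≤ g * Y ^ 2 := by
        rw [hvreY]
        linarith only [mul_nonneg (mul_nonneg hc0.le hr20Y.le) hx,
          mul_nonneg hg0.le (sq_nonneg x)]
      have hYRl : lam0 * Y ≤ x ^ 2 + Y ^ 2 := by
        nlinarith only [hYR, hRl, hY0, hR0, hR2Y]
      have h2 : c * lam0 * Y ^ 2 ≤ |v.im| := by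
        rw [hvim_abs]
        linarith only [mul_nonneg hc0.le (mul_nonneg hY0 (sub_nonneg.2 hYRl)),
          mul_nonneg (mul_nonneg hg0.le hY0) hx]
      calc t * (-v.re) ≤ t1 * (-v.re) :=
            mul_le_mul_of_nonneg_right (min_le_left _ _) hvpos
        _ ≤ t1 * (g * Y ^ 2) := mul_le_mul_of_nonneg_left h1 ht10.le
        _ = c * lam0 * Y ^ 2 := by rw [show t1 * (g * Y ^ 2) = t1 * g * Y ^ 2 by ring, ht1g]
        _ ≤ |v.im| := h2
    · -- x < 0
      have hcarg : Real.cos lam.arg = x / R := Complex.cos_arg hne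
      have h1 : Real.cos (π - ε) ≤ Real.cos lam.arg := by
        rw [← Real.cos_abs lam.arg]
        exact Real.cos_le_cos_of_nonneg_of_le_pi (abs_nonneg _) (by linarith) harg
      rw [Real.cos_pi_sub, hcarg] at h1
      have hxcos : -x ≤ R * Real.cos ε := by
        have h2 := mul_le_mul_of_nonneg_right h1 hR0.le
        rw [div_mul_cancel₀ x hR0.ne'] at h2
        linarith only [h2]
      have hxR : -x ≤ R := by
        nlinarith only [hxcos, hR0, Real.cos_le_one ε]
      have hYs : R * Real.sin ε ≤ Y := by
        have hx2 : x ^ 2 ≤ R ^ 2 * Real.cos ε ^ 2 := by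
          nlinarith only [hxcos, hx, hcε, hR0]
        have hpyth : R ^ 2 * (Real.sin ε ^ 2 + Real.cos ε ^ 2) = R ^ 2 * 1 := by
          rw [Real.sin_sq_add_cos_sq]
        have hy2 : (R * Real.sin ε) ^ 2 ≤ Y ^ 2 := by
          linarith only [hx2, hpyth, hR2Y]
        by_contra hcon
        push_neg at hcon
        nlinarith only [hy2, hcon, hY0, mul_pos hR0 hsε]
      rcases le_or_gt (4 * g * (-x)) (c * (x ^ 2 + Y ^ 2)) with hcase | hcase
      · -- 4 g |x| ≤ c r2
        have hF2 : c * (x ^ 2 + Y ^ 2) ≤ 2 * (c * (x ^ 2 + Y ^ 2) + 2 * g * x) := by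
          linarith only [hcase]
        have hnum : -v.re ≤ (x ^ 2 + Y ^ 2) * (c * R + g) := by
          rw [hvreY]
          linarith only [mul_nonneg (mul_nonneg hc0.le hr20Y.le)
              (by linarith only [hxR] : (0:ℝ) ≤ R + x),
            mul_nonneg hg0.le (sq_nonneg x)]
        have him : Real.sin ε * (c * (x ^ 2 + Y ^ 2)) * R ≤ 2 * |v.im| := by
          rw [hvim_abs]
          linarith only [mul_nonneg hF0 (sub_nonneg.2 hYs),
            mul_nonneg (mul_nonneg hsε.le hR0.le) (sub_nonneg.2 hF2)]
        have hmid : 2 * t2 * (c * R + g) ≤ Real.sin ε * c * R := by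
          have hpos : (0:ℝ) < c * lam0 + g := by positivity
          have e1 : 2 * t2 * (c * R + g) * (c * lam0 + g) =
              Real.sin ε * c * lam0 * (c * R + g) := by
            linear_combination (c * R + g) * ht2g
          have e2 : Real.sin ε * c * lam0 * (c * R + g) ≤
              Real.sin ε * c * R * (c * lam0 + g) := by
            linarith only [mul_nonneg (mul_nonneg (mul_nonneg hsε.le hc0.le) hg0.le)
              (sub_nonneg.2 hRl)]
          exact le_of_mul_le_mul_right (e1.trans_le e2) hpos
        have ht_le : t ≤ t2 := le_trans (min_le_right _ _) (min_le_left _ _)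
        have s1 : t * (-v.re) ≤ t2 * (-v.re) := mul_le_mul_of_nonneg_right ht_le hvpos
        have s2 : t2 * (-v.re) ≤ t2 * ((x ^ 2 + Y ^ 2) * (c * R + g)) :=
          mul_le_mul_of_nonneg_left hnum ht20.le
        have s3 : 2 * (t2 * ((x ^ 2 + Y ^ 2) * (c * R + g))) ≤
            Real.sin ε * c * R * (x ^ 2 + Y ^ 2) := by
          have := mul_le_mul_of_nonneg_left hmid hr20Y.le
          linarith only [this]
        have s4 : Real.sin ε * c * R * (x ^ 2 + Y ^ 2) ≤ 2 * |v.im| := by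
          linarith only [him]
        linarith only [s1, s2, s3, s4]
      · -- c r2 < 4 g |x|
        have hnum2 : c * (-v.re) ≤ (-x) * (c ^ 2 * (x ^ 2 + Y ^ 2) + 4 * g ^ 2) := by
          rw [hvreY]
          linarith only [mul_lt_mul_of_pos_left hcase hg0,
            mul_nonneg (mul_nonneg hc0.le hg0.le) (sq_nonneg x)]
        have him2 : Y * ((x ^ 2 + Y ^ 2) * κ) ≤ |v.im| := by
          rw [hvim_abs]
          exact mul_le_mul_of_nonneg_left hfaclb hY0
        have hr2l : lam0 ^ 2 ≤ x ^ 2 + Y ^ 2 := by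
          nlinarith only [hRl, hR2Y, hl0, hR0]
        have hCpos : (0:ℝ) ≤ c ^ 2 * (x ^ 2 + Y ^ 2) + 4 * g ^ 2 := by positivity
        have hkey : t3 * (c ^ 2 * (x ^ 2 + Y ^ 2) + 4 * g ^ 2) ≤
            Real.sin ε * κ * c * (x ^ 2 + Y ^ 2) := by
          have hp : (0:ℝ) < c ^ 2 * lam0 ^ 2 + 4 * g ^ 2 := by positivity
          have e1 : t3 * (c ^ 2 * (x ^ 2 + Y ^ 2) + 4 * g ^ 2) * (c ^ 2 * lam0 ^ 2 + 4 * g ^ 2) =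
              Real.sin ε * κ * lam0 ^ 2 * c * (c ^ 2 * (x ^ 2 + Y ^ 2) + 4 * g ^ 2) := by
            linear_combination (c ^ 2 * (x ^ 2 + Y ^ 2) + 4 * g ^ 2) * ht3g
          have e2 : Real.sin ε * κ * lam0 ^ 2 * c * (c ^ 2 * (x ^ 2 + Y ^ 2) + 4 * g ^ 2) ≤
              Real.sin ε * κ * c * (x ^ 2 + Y ^ 2) * (c ^ 2 * lam0 ^ 2 + 4 * g ^ 2) := by
            linarith only [mul_nonneg
              (mul_nonneg (mul_nonneg (mul_nonneg hsε.le hκ0.le) hc0.le)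
                (by positivity : (0:ℝ) ≤ 4 * g ^ 2))
              (sub_nonneg.2 hr2l)]
          exact le_of_mul_le_mul_right (e1.trans_le e2) hp
        have ht_le : t ≤ t3 := le_trans (min_le_right _ _) (min_le_right _ _)
        have s1 : t3 * (c * (-v.re)) ≤ t3 * ((-x) * (c ^ 2 * (x ^ 2 + Y ^ 2) + 4 * g ^ 2)) :=
          mul_le_mul_of_nonneg_left hnum2 ht30.le
        have s2 : t3 * ((-x) * (c ^ 2 * (x ^ 2 + Y ^ 2) + 4 * g ^ 2)) ≤
            t3 * (R * (c ^ 2 * (x ^ 2 + Y ^ 2) + 4 * g ^ 2)) :=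
          mul_le_mul_of_nonneg_left (mul_le_mul_of_nonneg_right hxR hCpos) ht30.le
        have s3 : t3 * (R * (c ^ 2 * (x ^ 2 + Y ^ 2) + 4 * g ^ 2)) ≤
            R * (Real.sin ε * κ * c * (x ^ 2 + Y ^ 2)) := by
          have := mul_le_mul_of_nonneg_left hkey hR0.le
          linarith only [this]
        have s4 : R * (Real.sin ε * κ * c * (x ^ 2 + Y ^ 2)) ≤ c * |v.im| := by
          have h5 : R * Real.sin ε * ((x ^ 2 + Y ^ 2) * κ) ≤ Y * ((x ^ 2 + Y ^ 2) * κ) :=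
            mul_le_mul_of_nonneg_right hYs (by positivity)
          have h6 := mul_le_mul_of_nonneg_left (h5.trans him2) hc0.le
          linarith only [h6]
        have s5 : c * (t * (-v.re)) ≤ c * (t3 * (-v.re)) :=
          mul_le_mul_of_nonneg_left (mul_le_mul_of_nonneg_right ht_le hvpos) hc0.le
        have s6 : c * (t * (-v.re)) ≤ c * |v.im| := by
          linarith only [s1, s2, s3, s4, s5]
        exact le_of_mul_le_mul_left s6 hc0
  -- conclude
  refine ⟨hw0, hz0, ?_⟩
  rw [hargzv]
  rcases le_or_gt 0 v.re with hvre0 | hvre0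
  · have h1 : |v.arg| ≤ π / 2 := Complex.abs_arg_le_pi_div_two_iff.2 hvre0
    have h2 : Real.arcsin s0 < π / 2 := Real.arcsin_lt_pi_div_two.2 hs01
    linarith only [h1, h2]
  · have hq2 := hineq hvre0
    have him0 : v.im ≠ 0 := by
      intro h
      rw [h] at hq2
      simp only [abs_zero] at hq2
      nlinarith only [hq2, ht0, hvre0]
    have hvne : v ≠ 0 := by
      intro h; rw [h] at hvre0; simp at hvre0
    have habsv : 0 < ‖v‖ := norm_pos_iff.mpr hvne
    have hs0le : s0 ≤ |v.im| / ‖v‖ := by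
      rw [le_div_iff₀ habsv]
      have h7 : ‖v‖ ≤ |v.re| + |v.im| := Complex.norm_le_abs_re_add_abs_im v
      have h7m := mul_le_mul_of_nonneg_left h7 ht0.le
      have h8 : |v.re| = -v.re := abs_of_neg hvre0
      have hs0t' : s0 * (1 + t) * ‖v‖ = t * ‖v‖ := by rw [hs0t]
      nlinarith only [h7m, h8, hq2, hs0t', ht0, abs_nonneg v.im,
        (by linarith only [ht0] : (0:ℝ) < 1 + t)]
    have hargabs : |v.arg| = π - Real.arcsin (|v.im| / ‖v‖) := by
      rcases him0.lt_or_gt with him | him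
      · rw [Complex.arg_of_re_neg_of_im_neg hvre0 him]
        have hle : Real.arcsin ((-v).im / ‖v‖) ≤ π / 2 :=
          Real.arcsin_le_pi_div_two _
        rw [abs_of_neg (by linarith only [hle, hπ])]
        rw [Complex.neg_im, abs_of_neg him]
        ring_nf
      · rw [Complex.arg_of_re_neg_of_im_nonneg hvre0 him.le]
        have hge : -(π / 2) ≤ Real.arcsin ((-v).im / ‖v‖) :=
          Real.neg_pi_div_two_le_arcsin _
        rw [abs_of_pos (by linarith only [hge, hπ])]
        rw [Complex.neg_im, neg_div, Real.arcsin_neg, abs_of_pos him]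
        ring
    rw [hargabs]
    have hmono : Real.arcsin s0 ≤ Real.arcsin (|v.im| / ‖v‖) :=
      Real.monotone_arcsin hs0le
    linarith only [hmono]

end
end

section
/- Let 0 < ε < π/2, s ≥ 1, N ≥ 2, and let μ+, ν+, γ1+, γ2+, λ0 be positive constants. Then there exist constants c, C > 0, depending only on s, μ+, ν+, γ1+, γ2+, λ0 and ε, such that for every λ ∈ Γ_{ε,λ0} with δ = γ1+γ2+ λ⁻¹ and every ξ′ ∈ ℝ^{N−1}: c(|λ| + |ξ′|²) ≤ |(sμ+ + ν+ + δ)⁻¹ λ + |ξ′|²| ≤ C(|λ| + |ξ′|²). -/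
open Complex Real

noncomputable section

private lemma statement2_aux (r t P A ρ m E2 : ℝ) (hE2 : E2 = r^2 + 2*t*P + t^2*A^2)
    (hkey : -(ρ*(r*A)) ≤ P) (ht : 0 ≤ t) (hρ : 0 ≤ ρ) (h1ρ : 0 ≤ 1-ρ) (hm2 : m^2 ≤ A^2) :
    (1-ρ) * (r^2 + m^2*t^2) ≤ E2 := by
  nlinarith [mul_le_mul_of_nonneg_left hkey ht, mul_nonneg hρ (sq_nonneg (r - t*A)),
    mul_nonneg (mul_nonneg h1ρ (sq_nonneg t)) (sub_nonneg.2 hm2)]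

private lemma statement2_aux2 (r t ρ m mm : ℝ) (h1ρ : 0 ≤ 1 - ρ) (hmm0 : 0 ≤ mm)
    (hmm1 : mm ≤ 1) (hmm2 : mm ≤ m ^ 2) :
    (1 - ρ) * mm / 2 * (r + t) ^ 2 ≤ (1 - ρ) * (r ^ 2 + m ^ 2 * t ^ 2) := by
  nlinarith [mul_nonneg (mul_nonneg h1ρ hmm0) (sq_nonneg (r - t)),
    mul_nonneg (mul_nonneg h1ρ (sub_nonneg.2 hmm1)) (sq_nonneg r),
    mul_nonneg (mul_nonneg h1ρ (sub_nonneg.2 hmm2)) (sq_nonneg t)]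

set_option maxHeartbeats 1000000

/-- Two-sided bound
`c(|λ| + |ξ′|²) ≤ |(sμ+ + ν+ + δ)⁻¹ λ + |ξ′|²| ≤ C(|λ| + |ξ′|²)` for `λ ∈ Γ_{ε,λ0}`,
`δ = γ1+γ2+ λ⁻¹` and `ξ′ ∈ ℝ^{N−1}`. -/
theorem statement2 (N : ℕ) (hN : 2 ≤ N) (ε s μp νp γ1p γ2p lam0 : ℝ)
    (hε0 : 0 < ε) (hεπ : ε < π / 2) (hs : 1 ≤ s)
    (hμ : 0 < μp) (hν : 0 < νp) (hγ1 : 0 < γ1p) (hγ2 : 0 < γ2p) (hl0 : 0 < lam0) :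
    ∃ c C : ℝ, 0 < c ∧ 0 < C ∧
      ∀ lam ∈ GammaReg ε lam0 γ1p γ2p νp, ∀ ξ : EuclideanSpace ℝ (Fin (N - 1)),
        c * (‖lam‖ + ‖ξ‖ ^ 2) ≤
            ‖(((s * μp + νp : ℝ) : ℂ) + ((γ1p * γ2p : ℝ) : ℂ) * lam⁻¹)⁻¹ * lam
                + ((‖ξ‖ ^ 2 : ℝ) : ℂ)‖ ∧
          ‖(((s * μp + νp : ℝ) : ℂ) + ((γ1p * γ2p : ℝ) : ℂ) * lam⁻¹)⁻¹ * lam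
                + ((‖ξ‖ ^ 2 : ℝ) : ℂ)‖ ≤
            C * (‖lam‖ + ‖ξ‖ ^ 2) := by
  have hπ : (0:ℝ) < π := Real.pi_pos
  have hg : 0 < γ1p * γ2p := mul_pos hγ1 hγ2
  set g := γ1p * γ2p with hgdef
  set b := s * μp + νp with hbdef
  have hb : 0 < b := by nlinarith
  have hbge : μp + νp ≤ b := by nlinarith
  set a := g / νp + ε with hadef
  have ha : 0 < a := by positivity
  have hva : νp * a = g + νp * ε := by
    rw [hadef]; field_simp
  have hβ2 : g / (2 * a) ≤ νp / 2 := by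
    rw [div_le_div_iff₀ (by positivity) two_pos]; nlinarith
  have hga : g / a ≤ νp := by
    rw [div_le_iff₀ ha]; nlinarith
  set U := g / lam0 with hUdef
  have hU : 0 < U := div_pos hg hl0
  set m := μp + νp / 2 with hmdef
  have hm : 0 < m := by positivity
  set M := b + U with hMdef
  have hM : 0 < M := by positivity
  have hsin : 0 < Real.sin ε := Real.sin_pos_of_pos_of_lt_pi hε0 (by linarith)
  have hsin1 : Real.sin ε ≤ 1 := Real.sin_le_one ε
  have hs2 : (0:ℝ) < Real.sqrt 2 := by positivity
  have hs2sq : (Real.sqrt 2) ^ 2 = 2 := Real.sq_sqrt (by norm_num)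
  have hs21 : (1:ℝ) ≤ Real.sqrt 2 := by nlinarith
  set κ := Real.sin ε * μp / Real.sqrt 2 with hκdef
  have hκ : 0 < κ := by positivity
  set τ := κ / M with hτdef
  have hτ : 0 < τ := div_pos hκ hM
  set ρ := (Real.sqrt (1 + τ ^ 2))⁻¹ with hρdef
  have hst : 0 < Real.sqrt (1 + τ ^ 2) := Real.sqrt_pos.2 (by positivity)
  have hstsq : (Real.sqrt (1 + τ ^ 2)) ^ 2 = 1 + τ ^ 2 := Real.sq_sqrt (by positivity)
  have hρ0 : 0 < ρ := inv_pos.2 hst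
  have hρ1 : ρ < 1 := by
    rw [hρdef]
    exact inv_lt_one_of_one_lt₀ (by nlinarith)
  have h1ρ : 0 < 1 - ρ := by linarith
  have hρsq : ρ ^ 2 * (1 + τ ^ 2) = 1 := by
    rw [hρdef, inv_pow, hstsq]
    exact inv_mul_cancel₀ (by positivity)
  set mm := min 1 (m ^ 2) with hmmdef
  have hmm0 : 0 < mm := lt_min one_pos (by positivity)
  have hmm1 : mm ≤ 1 := min_le_left _ _
  have hmm2 : mm ≤ m ^ 2 := min_le_right _ _
  set q := (1 - ρ) * mm / 2 with hqdef
  have hq0 : 0 < q := div_pos (mul_pos h1ρ hmm0) two_pos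
  refine ⟨Real.sqrt q / M, max (1 / m) 1, div_pos (Real.sqrt_pos.2 hq0) hM,
    lt_of_lt_of_le one_pos (le_max_right _ _), ?_⟩
  intro lam hmem ξ
  simp only [GammaReg, SigmaSecTr, SigmaSec, Kreg, Set.mem_inter_iff, Set.mem_setOf_eq,
    Set.mem_sep_iff] at hmem
  obtain ⟨⟨⟨hne, harg⟩, hrl⟩, hK⟩ := hmem
  set t := ‖ξ‖ ^ 2 with htdef
  have ht : 0 ≤ t := by positivity
  set r := ‖lam‖ with hrdef
  have hr : 0 < r := lt_of_lt_of_le hl0 hrl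
  set x := lam.re with hxdef
  set y := lam.im with hydef
  have hn : x ^ 2 + y ^ 2 = r ^ 2 := by
    simp only [hrdef, hxdef, hydef, Complex.sq_norm, Complex.normSq_apply]; ring
  have hns : Complex.normSq lam = r ^ 2 := by
    rw [← Complex.sq_norm, ← hrdef]
  have hKx : 0 ≤ r ^ 2 + 2 * a * x := by
    rw [hadef, hgdef]
    linarith only [hK, hn, sq_nonneg (x + γ1p * γ2p / νp + ε)]
  set w := (((b:ℝ):ℂ) + ((g:ℝ):ℂ) * lam⁻¹) with hwdef
  have hw_re : w.re = b + g * (x / r ^ 2) := by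
    rw [hwdef]
    simp only [Complex.add_re, Complex.ofReal_re, Complex.mul_re, Complex.ofReal_im,
      Complex.inv_re, Complex.inv_im, hns, ← hxdef, ← hydef]
    ring
  have hw_im : w.im = -(g * (y / r ^ 2)) := by
    rw [hwdef]
    simp only [Complex.add_im, Complex.ofReal_im, Complex.mul_im, Complex.ofReal_re,
      Complex.inv_re, Complex.inv_im, hns, ← hxdef, ← hydef]
    ring
  -- lower bound on Re w
  have hgx : -(g / (2 * a)) ≤ g * (x / r ^ 2) := by
    have key : g * (x / r ^ 2) + g / (2 * a) = g * (r ^ 2 + 2 * a * x) / (2 * a * r ^ 2) := by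
      field_simp; ring
    have h2 : 0 ≤ g * (r ^ 2 + 2 * a * x) / (2 * a * r ^ 2) :=
      div_nonneg (mul_nonneg hg.le hKx) (by positivity)
    rw [← key] at h2
    linarith
  have hwre_ge : m ≤ w.re := by
    rw [hw_re, hmdef]; linarith
  have hwre_pos : 0 < w.re := lt_of_lt_of_le hm hwre_ge
  have hw0 : w ≠ 0 := by
    intro h; rw [h] at hwre_pos; simp at hwre_pos
  have habsw_ge : m ≤ ‖w‖ := le_trans hwre_ge (Complex.re_le_norm w)
  have habsw_pos : 0 < ‖w‖ := lt_of_lt_of_le hm habsw_ge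
  have habsw_le : ‖w‖ ≤ M := by
    rw [hwdef, hMdef]
    refine (norm_add_le _ _).trans ?_
    rw [norm_mul, norm_inv, Complex.norm_real, Complex.norm_real, Real.norm_eq_abs,
      Real.norm_eq_abs, ← hrdef,
      abs_of_pos hb, abs_of_pos hg]
    have h9 : g * r⁻¹ ≤ U := by
      rw [hUdef, ← div_eq_mul_inv]
      exact div_le_div_of_nonneg_left hg.le hl0 hrl
    linarith
  have habsw2 : w.re ^ 2 + w.im ^ 2 = (‖w‖) ^ 2 := by
    rw [Complex.sq_norm, Complex.normSq_apply]; ring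
  -- key angle estimate
  have hkey : -(ρ * (r * ‖w‖)) ≤ x * w.re + y * w.im := by
    rcases le_or_gt 0 (x * w.re + y * w.im) with hP | hP
    · have : 0 ≤ ρ * (r * ‖w‖) := by positivity
      linarith
    · have hPQ : (x * w.re + y * w.im) ^ 2 + (y * w.re - x * w.im) ^ 2
          = r ^ 2 * (‖w‖) ^ 2 := by
        rw [← habsw2]; linear_combination (w.re ^ 2 + w.im ^ 2) * hn
      have hQform : y * w.re - x * w.im = y * (b + 2 * g * (x / r ^ 2)) := by
        rw [hw_re, hw_im]; ring
      have hQlb : κ * r ≤ |y * w.re - x * w.im| := by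
        rcases lt_or_ge x 0 with hx | hx
        · -- x < 0
          have hfac : μp ≤ b + 2 * g * (x / r ^ 2) := by
            have key : 2 * g * (x / r ^ 2) + g / a
                = g * (r ^ 2 + 2 * a * x) / (a * r ^ 2) := by field_simp; ring
            have h2 : 0 ≤ g * (r ^ 2 + 2 * a * x) / (a * r ^ 2) :=
              div_nonneg (mul_nonneg hg.le hKx) (by positivity)
            rw [← key] at h2
            linarith
          have hy : Real.sin ε * r ≤ |y| := by
            have hsina : Real.sin lam.arg = y / r := by
              rw [Complex.sin_arg, ← hrdef, ← hydef]
            have hcos : Real.cos lam.arg = x / r := by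
              rw [Complex.cos_arg hne, ← hrdef, ← hxdef]
            have hθ2 : π / 2 ≤ |lam.arg| := by
              by_contra hcon
              push_neg at hcon
              have h4 : 0 ≤ Real.cos lam.arg := by
                apply Real.cos_nonneg_of_mem_Icc
                constructor
                · linarith [neg_abs_le lam.arg]
                · linarith [le_abs_self lam.arg]
              rw [hcos] at h4
              have h8 := mul_nonneg h4 hr.le
              rw [div_mul_cancel₀ _ (ne_of_gt hr)] at h8
              linarith
            have hsge : Real.sin ε ≤ Real.sin |lam.arg| := by
              rw [← Real.cos_pi_div_two_sub ε, ← Real.cos_sub_pi_div_two |lam.arg|]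
              exact Real.cos_le_cos_of_nonneg_of_le_pi (by linarith) (by linarith)
                (by linarith [harg])
            have habs_sin : Real.sin |lam.arg| ≤ |Real.sin lam.arg| := by
              rcases abs_cases lam.arg with ⟨h, _⟩ | ⟨h, _⟩
              · rw [h]; exact le_abs_self _
              · rw [h, Real.sin_neg]; exact neg_le_abs _
            have h7 : |Real.sin lam.arg| = |y| / r := by
              rw [hsina, abs_div, abs_of_pos hr]
            have hfin : Real.sin ε ≤ |y| / r := by
              rw [← h7]; linarith
            exact (le_div_iff₀ hr).1 hfin
          have hfacpos : 0 < b + 2 * g * (x / r ^ 2) := lt_of_lt_of_le hμ hfac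
          have hQab : |y * w.re - x * w.im| = |y| * (b + 2 * g * (x / r ^ 2)) := by
            rw [hQform, abs_mul, abs_of_pos hfacpos]
          rw [hQab]
          have hκle : κ ≤ Real.sin ε * μp := by
            rw [hκdef]
            exact div_le_self (by positivity) hs21
          nlinarith only [hy, hfac, hr.le, hμ.le, hsin.le, abs_nonneg y, hκle, hκ.le]
        · -- 0 ≤ x
          have hPform : x * w.re + y * w.im = b * x + g * ((x ^ 2 - y ^ 2) / r ^ 2) := by
            rw [hw_re, hw_im]; ring
          have hyx : x ^ 2 < y ^ 2 := by
            by_contra hcon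
            push_neg at hcon
            have h0 : 0 ≤ b * x + g * ((x ^ 2 - y ^ 2) / r ^ 2) :=
              add_nonneg (mul_nonneg hb.le hx)
                (mul_nonneg hg.le (div_nonneg (by linarith) (by positivity)))
            rw [← hPform] at h0
            linarith
          have hy2 : r ^ 2 ≤ 2 * y ^ 2 := by linarith only [hn, hyx]
          have hyr : r ≤ Real.sqrt 2 * |y| := by
            apply le_of_pow_le_pow_left₀ two_ne_zero (by positivity)
            rw [mul_pow, hs2sq, _root_.sq_abs]
            linarith only [hy2]
          have hfac : μp ≤ b + 2 * g * (x / r ^ 2) := by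
            have h5 : 0 ≤ 2 * g * (x / r ^ 2) := by positivity
            linarith
          have hfacpos : 0 < b + 2 * g * (x / r ^ 2) := lt_of_lt_of_le hμ hfac
          have hQab : |y * w.re - x * w.im| = |y| * (b + 2 * g * (x / r ^ 2)) := by
            rw [hQform, abs_mul, abs_of_pos hfacpos]
          rw [hQab]
          have hκr : κ * r ≤ Real.sin ε * μp * |y| := by
            calc κ * r ≤ κ * (Real.sqrt 2 * |y|) := mul_le_mul_of_nonneg_left hyr hκ.le
              _ = Real.sin ε * μp * |y| * (Real.sqrt 2 / Real.sqrt 2) := by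
                  rw [hκdef]; ring
              _ = Real.sin ε * μp * |y| := by
                  rw [div_self (ne_of_gt hs2)]; ring
          have h10 : Real.sin ε * μp * |y| ≤ |y| * (b + 2 * g * (x / r ^ 2)) := by
            linarith only [mul_nonneg (mul_nonneg (abs_nonneg y) hμ.le) (sub_nonneg.2 hsin1),
              mul_nonneg (abs_nonneg y) (sub_nonneg.2 hfac)]
          linarith
      have hQ2 : κ ^ 2 * r ^ 2 ≤ (y * w.re - x * w.im) ^ 2 := by
        nlinarith only [hQlb, abs_nonneg (y * w.re - x * w.im),
          _root_.sq_abs (y * w.re - x * w.im), mul_pos hκ hr]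
      have hP2M : (x * w.re + y * w.im) ^ 2 ≤ r ^ 2 * M ^ 2 := by
        nlinarith only [hPQ, sq_nonneg (y * w.re - x * w.im), sq_nonneg r,
          mul_le_mul habsw_le habsw_le habsw_pos.le hM.le]
      have hτM : τ ^ 2 * M ^ 2 = κ ^ 2 := by
        rw [hτdef]; field_simp
      have hκr2 : τ ^ 2 * (r ^ 2 * M ^ 2) = κ ^ 2 * r ^ 2 := by
        rw [← hτM]; ring
      have htP := mul_le_mul_of_nonneg_left hP2M (sq_nonneg τ)
      have hP2 : (x * w.re + y * w.im) ^ 2 * (1 + τ ^ 2) ≤ (r * ‖w‖) ^ 2 := by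
        linarith only [htP, hκr2, hQ2, hPQ]
      have e1 : (x * w.re + y * w.im) ^ 2 * (ρ ^ 2 * (1 + τ ^ 2))
          = (x * w.re + y * w.im) ^ 2 := by
        rw [hρsq, mul_one]
      have hB2 : (x * w.re + y * w.im) ^ 2 ≤ (ρ * (r * ‖w‖)) ^ 2 := by
        linarith only [mul_le_mul_of_nonneg_left hP2 (sq_nonneg ρ), e1]
      have hB0 : 0 ≤ ρ * (r * ‖w‖) := by positivity
      nlinarith only [hB2, hB0, hP]
  -- rewrite the goal
  have hEeq : w⁻¹ * lam + ((t:ℝ):ℂ) = w⁻¹ * (lam + (t:ℝ) * w) := by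
    rw [mul_add, mul_comm ((t:ℝ):ℂ) w, ← mul_assoc, inv_mul_cancel₀ hw0, one_mul]
  rw [hEeq, norm_mul, norm_inv]
  set E := lam + ((t:ℝ):ℂ) * w with hEdef
  have hE2 : (‖E‖) ^ 2
      = r ^ 2 + 2 * t * (x * w.re + y * w.im) + t ^ 2 * (w.re ^ 2 + w.im ^ 2) := by
    rw [hEdef, Complex.sq_norm, Complex.normSq_apply]
    simp only [Complex.add_re, Complex.add_im, Complex.mul_re, Complex.mul_im,
      Complex.ofReal_re, Complex.ofReal_im, ← hxdef, ← hydef]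
    linear_combination hn
  constructor
  · -- lower bound
    have hm2le : m ^ 2 ≤ (‖w‖) ^ 2 := by nlinarith only [habsw_ge, hm.le]
    have step1 : (1 - ρ) * (r ^ 2 + m ^ 2 * t ^ 2) ≤ (‖E‖) ^ 2 := by
      have hE2' : (‖E‖) ^ 2
          = r ^ 2 + 2 * t * (x * w.re + y * w.im) + t ^ 2 * (‖w‖) ^ 2 := by
        rw [hE2, habsw2]
      exact statement2_aux r t (x * w.re + y * w.im) (‖w‖) ρ m _ hE2' hkey ht
        hρ0.le h1ρ.le hm2le
    have step2 : q * (r + t) ^ 2 ≤ (1 - ρ) * (r ^ 2 + m ^ 2 * t ^ 2) := by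
      rw [hqdef]
      exact statement2_aux2 r t ρ m mm h1ρ.le hmm0.le hmm1 hmm2
    have key2 : Real.sqrt q * (r + t) ≤ ‖E‖ := by
      apply le_of_pow_le_pow_left₀ two_ne_zero (norm_nonneg _)
      rw [mul_pow, Real.sq_sqrt hq0.le]
      linarith
    calc Real.sqrt q / M * (r + t) = Real.sqrt q * (r + t) / M := by ring
      _ ≤ ‖E‖ / M := by gcongr
      _ ≤ (‖w‖)⁻¹ * ‖E‖ := by
          rw [inv_mul_eq_div]
          exact div_le_div_of_nonneg_left (norm_nonneg _) habsw_pos habsw_le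
  · -- upper bound
    have habsE_le : ‖E‖ ≤ r + t * ‖w‖ := by
      rw [hEdef]
      refine (norm_add_le _ _).trans ?_
      rw [norm_mul, Complex.norm_real, Real.norm_eq_abs, _root_.abs_of_nonneg ht, ← hrdef]
    have h1 : (‖w‖)⁻¹ * ‖E‖
        ≤ (‖w‖)⁻¹ * (r + t * ‖w‖) :=
      mul_le_mul_of_nonneg_left habsE_le (by positivity)
    have h2 : (‖w‖)⁻¹ * (r + t * ‖w‖) = r / ‖w‖ + t := by
      field_simp
    have h3 : r / ‖w‖ ≤ r / m :=
      div_le_div_of_nonneg_left hr.le hm habsw_ge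
    have h4 : r / m ≤ max (1 / m) 1 * r := by
      rw [div_eq_mul_one_div r m, mul_comm r (1 / m)]
      exact mul_le_mul_of_nonneg_right (le_max_left _ _) hr.le
    have h5 : t ≤ max (1 / m) 1 * t :=
      le_mul_of_one_le_left ht (le_max_right _ _)
    have h6 : max (1 / m) 1 * (r + t) = max (1 / m) 1 * r + max (1 / m) 1 * t := by ring
    linarith [h1, h2, h3, h4, h5, h6]

end
end

section
/- Let N ≥ 2, 0 < ε < π/2, and let μ+, μ−, ν+, γ1+, γ1−, γ2+, λ0 be positive constants. Then there exist constants c, C > 0, depending only on μ+, μ−, ν+, γ1+, γ1−, γ2+, λ0 and ε, such that for every λ ∈ Γ_{ε,λ0} (with δ = γ1+γ2+ λ⁻¹) and every ξ′ ∈ ℝ^{N−1} \ {0}, each of the five quantities M ∈ {A+, B+, B−, A+ + B+, μ+B+ + μ−B−} satisfies c(|λ|^{1/2} + |ξ′|) ≤ |M| ≤ C(|λ|^{1/2} + |ξ′|). -/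
open Complex Real

noncomputable section

/-- `δ = γ1+ γ2+ λ⁻¹` (case (C1)). -/
def deltaC (γ1p γ2p : ℝ) (lam : ℂ) : ℂ := ((γ1p * γ2p : ℝ) : ℂ) * lam⁻¹

/-- The characteristic root `A₊ = √(γ1+ (μ+ + ν+ + δ)⁻¹ λ + A²)` (principal branch). -/
def Aplus (μp νp γ1p γ2p : ℝ) (lam : ℂ) (A : ℝ) : ℂ :=
  ((γ1p : ℂ) * ((μp : ℂ) + (νp : ℂ) + deltaC γ1p γ2p lam)⁻¹ * lam + (A : ℂ) ^ 2)
    ^ (1 / 2 : ℂ)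

/-- The characteristic root `B = √(γ μ⁻¹ λ + A²)` (principal branch). -/
def Bgen (μ γ1 : ℝ) (lam : ℂ) (A : ℝ) : ℂ :=
  ((γ1 : ℂ) * (μ : ℂ)⁻¹ * lam + (A : ℂ) ^ 2) ^ (1 / 2 : ℂ)

set_option maxHeartbeats 1000000
set_option linter.unusedVariables false
namespace St3Aux

lemma unsquare {a b : ℝ} (ha : 0 ≤ a) (hb : 0 ≤ b) (h : a^2 ≤ b^2) : a ≤ b := by
  nlinarith

lemma sector_add {c : ℝ} (hc0 : 0 ≤ c) (hc1 : c < 1) (w : ℂ) (t : ℝ) (ht : 0 ≤ t)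
    (hre : -c * ‖w‖ ≤ w.re) :
    Real.sqrt ((1-c)/2) * (‖w‖ + t) ≤ ‖(w + (t:ℂ))‖ := by
  have habs : 0 ≤ ‖w‖ := norm_nonneg w
  have h1 : (w.re)^2 + (w.im)^2 = (‖w‖)^2 := by
    rw [Complex.sq_norm, Complex.normSq_apply]; ring
  have h2 : (‖(w + (t:ℂ))‖)^2 = (w.re + t)^2 + w.im^2 := by
    rw [Complex.sq_norm, Complex.normSq_apply]; simp; ring
  apply unsquare (by positivity) (norm_nonneg _)
  rw [mul_pow, Real.sq_sqrt (by linarith : (0:ℝ) ≤ (1-c)/2), h2]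
  nlinarith [sq_nonneg (‖w‖ - t), mul_nonneg ht (by linarith : 0 ≤ w.re + c * ‖w‖)]

lemma abs_pow_half (W : ℂ) : ‖(W ^ (1/2:ℂ))‖ = Real.sqrt (‖W‖) := by
  rw [show (1/2:ℂ) = (2⁻¹:ℂ) by norm_num]
  have hre := Complex.cpow_inv_two_re W
  have him := Complex.abs_cpow_inv_two_im W
  have hle := abs_le.1 (Complex.abs_re_le_norm W)
  have h1 : 0 ≤ (‖W‖ + W.re)/2 := by linarith [hle.1]
  have h2 : 0 ≤ (‖W‖ - W.re)/2 := by linarith [hle.2]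
  have key : (‖(W ^ (2⁻¹:ℂ))‖)^2 = ‖W‖ := by
    have e1 : (W ^ (2⁻¹:ℂ)).re^2 = (‖W‖ + W.re)/2 := by rw [hre, Real.sq_sqrt h1]
    have e2 : (W ^ (2⁻¹:ℂ)).im^2 = (‖W‖ - W.re)/2 := by
      rw [← _root_.sq_abs, him, Real.sq_sqrt h2]
    have e3 : (‖(W ^ (2⁻¹:ℂ))‖)^2 = (W ^ (2⁻¹:ℂ)).re^2 + (W ^ (2⁻¹:ℂ)).im^2 := by
      rw [Complex.sq_norm, Complex.normSq_apply]; ring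
    rw [e3, e1, e2]; ring
  rw [← key, Real.sqrt_sq (norm_nonneg _)]

lemma re_pow_half_nonneg (W : ℂ) : 0 ≤ (W ^ (1/2:ℂ)).re := by
  rw [show (1/2:ℂ) = (2⁻¹:ℂ) by norm_num, Complex.cpow_inv_two_re]
  exact Real.sqrt_nonneg _

lemma re_pow_half_ge {c : ℝ} (hc1 : c < 1) (W : ℂ) (hre : -c * ‖W‖ ≤ W.re) :
    Real.sqrt ((1-c)/2) * ‖(W ^ (1/2:ℂ))‖ ≤ (W ^ (1/2:ℂ)).re := by
  rw [abs_pow_half, show (1/2:ℂ) = (2⁻¹:ℂ) by norm_num, Complex.cpow_inv_two_re,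
    ← Real.sqrt_mul (by linarith : (0:ℝ) ≤ (1-c)/2)]
  apply Real.sqrt_le_sqrt
  have habs := norm_nonneg W
  nlinarith

lemma sum_lower {t : ℝ} (ht0 : 0 < t) (ht1 : t ≤ 1) (a b : ℂ) (ha : 0 ≤ a.re)
    (hb : t * ‖b‖ ≤ b.re) :
    Real.sqrt ((1 - Real.sqrt (1 - t^2))/2) * (‖a‖ + ‖b‖)
      ≤ ‖(a + b)‖ := by
  set δ := Real.sqrt (1 - t^2) with hδ
  have hδ0 : 0 ≤ δ := Real.sqrt_nonneg _
  have hδ2 : δ^2 = 1 - t^2 := Real.sq_sqrt (by nlinarith)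
  have hδ1 : δ < 1 := by nlinarith
  have h1 : a.re^2 + a.im^2 = (‖a‖)^2 := by
    rw [Complex.sq_norm, Complex.normSq_apply]; ring
  have h2 : b.re^2 + b.im^2 = (‖b‖)^2 := by
    rw [Complex.sq_norm, Complex.normSq_apply]; ring
  have h3 : (‖(a+b)‖)^2 = (a.re+b.re)^2 + (a.im+b.im)^2 := by
    rw [Complex.sq_norm, Complex.normSq_apply]; simp; ring
  have hbabs := norm_nonneg b
  have haabs := norm_nonneg a
  have hbim : |b.im| ≤ δ * ‖b‖ := by
    apply unsquare (abs_nonneg _) (by positivity)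
    rw [mul_pow, _root_.sq_abs, hδ2]
    nlinarith [hb, mul_nonneg ht0.le hbabs]
  have haim : |a.im| ≤ ‖a‖ := Complex.abs_im_le_norm a
  have him : -(δ * ‖a‖ * ‖b‖) ≤ a.im * b.im := by
    have e1 : |a.im * b.im| ≤ ‖a‖ * (δ * ‖b‖) :=
      (abs_mul a.im b.im) ▸ mul_le_mul haim hbim (abs_nonneg _) haabs
    have e2 := neg_abs_le (a.im * b.im)
    linarith [e1, e2]
  have hre : 0 ≤ a.re * b.re := mul_nonneg ha (le_trans (by positivity) hb)
  apply unsquare (by positivity) (norm_nonneg _)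
  rw [mul_pow, Real.sq_sqrt (by linarith : (0:ℝ) ≤ (1-δ)/2), h3]
  nlinarith [sq_nonneg (‖a‖ - ‖b‖)]

lemma sqrt_split (r A : ℝ) (hr : 0 ≤ r) (hA : 0 ≤ A) :
    Real.sqrt r + A ≤ Real.sqrt 2 * Real.sqrt (r + A^2) ∧
      Real.sqrt (r + A^2) ≤ Real.sqrt r + A := by
  have hsr : Real.sqrt r ^2 = r := Real.sq_sqrt hr
  have hsrn : 0 ≤ Real.sqrt r := Real.sqrt_nonneg r
  constructor
  · apply unsquare (by positivity) (by positivity)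
    rw [mul_pow, Real.sq_sqrt (by norm_num : (0:ℝ) ≤ 2), Real.sq_sqrt (by positivity)]
    nlinarith [sq_nonneg (Real.sqrt r - A)]
  · apply unsquare (Real.sqrt_nonneg _) (by positivity)
    rw [Real.sq_sqrt (by positivity)]
    nlinarith

lemma sqrt_mono_mul {a b k : ℝ} (hk : 0 ≤ k) (ha : 0 ≤ a) (h : k * a ≤ b) :
    Real.sqrt k * Real.sqrt a ≤ Real.sqrt b := by
  rw [← Real.sqrt_mul hk]; exact Real.sqrt_le_sqrt h

lemma sqrt_mono_mul' {a b k : ℝ} (hk : 0 ≤ k) (ha : 0 ≤ a) (h : b ≤ k * a) :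
    Real.sqrt b ≤ Real.sqrt k * Real.sqrt a := by
  rw [← Real.sqrt_mul hk]; exact Real.sqrt_le_sqrt h

lemma cos_eps_lt_one {ε : ℝ} (hε0 : 0 < ε) (hεπ : ε < π/2) : Real.cos ε < 1 := by
  have hs := Real.sin_pos_of_pos_of_lt_pi hε0 (by linarith [Real.pi_pos])
  nlinarith [Real.sin_sq_add_cos_sq ε]

lemma cos_eps_pos {ε : ℝ} (hε0 : 0 < ε) (hεπ : ε < π/2) : 0 < Real.cos ε :=
  Real.cos_pos_of_mem_Ioo ⟨by linarith [Real.pi_pos], hεπ⟩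

lemma re_ge {ε : ℝ} (hε0 : 0 < ε) (hεπ : ε < π/2) (lam : ℂ) (hlam : lam ≠ 0)
    (harg : |lam.arg| ≤ π - ε) : -(Real.cos ε) * ‖lam‖ ≤ lam.re := by
  have hcos : Real.cos lam.arg = lam.re / ‖lam‖ := Complex.cos_arg hlam
  have habs : 0 < ‖lam‖ := norm_pos_iff.mpr hlam
  have hge : Real.cos (π - ε) ≤ Real.cos |lam.arg| :=
    Real.cos_le_cos_of_nonneg_of_le_pi (abs_nonneg _) (by linarith) harg
  rw [Real.cos_abs, Real.cos_pi_sub] at hge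
  have : lam.re = Real.cos lam.arg * ‖lam‖ := by
    rw [hcos]; field_simp
  rw [this]
  exact mul_le_mul_of_nonneg_right hge habs.le


/-- Distance from a point of `Γ` to a root on the circle `|ρ + R'| = R'`. -/
lemma dist_root {R R' lam0 : ℝ} (hR' : 0 < R') (hRR' : R' < R) (hl0 : 0 < lam0)
    (lam : ℂ) (hK : R^2 ≤ (lam.re + R)^2 + lam.im^2) (hr : lam0 ≤ ‖lam‖)
    (p e : ℝ) (hp : 0 < p) (hcirc : p^2 + e^2 = 2*R'*p) :
    min (1/3) ((R-R')*lam0/(12*R*R')) * (‖lam‖ + ‖((↑(-p) + ↑e * I : ℂ))‖)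
      ≤ ‖(lam - (↑(-p) + ↑e * I))‖ := by
  have hR : 0 < R := lt_trans hR' hRR'
  set ρ : ℂ := (↑(-p) + ↑e * I) with hρ
  have hρre : ρ.re = -p := by simp [hρ]
  have hρim : ρ.im = e := by simp [hρ]
  set n := ‖ρ‖ with hn
  have hn0 : 0 ≤ n := norm_nonneg ρ
  have hn2 : n^2 = 2*R'*p := by
    rw [hn, Complex.sq_norm, Complex.normSq_apply, hρre, hρim]; nlinarith [hcirc]
  set r := ‖lam‖ with hrdef
  have hr0 : 0 < r := lt_of_lt_of_le hl0 hr
  -- |lam + R| ≥ R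
  have hKlam : R ≤ ‖(lam + (R:ℂ))‖ := by
    apply unsquare hR.le (norm_nonneg _)
    rw [Complex.sq_norm, Complex.normSq_apply]
    simp only [Complex.add_re, Complex.add_im, Complex.ofReal_re, Complex.ofReal_im]
    nlinarith [hK]
  -- |ρ + R|² = R² - 2(R-R')p
  have habsρR : (‖(ρ + (R:ℂ))‖)^2 = R^2 - 2*(R-R')*p := by
    rw [Complex.sq_norm, Complex.normSq_apply]
    simp only [Complex.add_re, Complex.add_im, Complex.ofReal_re, Complex.ofReal_im, hρre, hρim]
    nlinarith [hcirc]
  have h0 : 0 ≤ R^2 - 2*(R-R')*p := habsρR ▸ sq_nonneg _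
  have hRR : 0 < R - R' := sub_pos.mpr hRR'
  set u := (R-R')*p/R with hu
  have huR : u*R = (R-R')*p := by rw [hu]; field_simp
  have hu0 : 0 ≤ u := by rw [hu]; exact div_nonneg (by nlinarith) hR.le
  have hule : u ≤ R/2 := by nlinarith
  have h1 : ‖(ρ + (R:ℂ))‖ ≤ R - u := by
    apply unsquare (norm_nonneg _) (by linarith)
    rw [habsρR]; nlinarith
  have h2 : u ≤ ‖(lam - ρ)‖ := by
    have htri := norm_add_le (lam - ρ) (ρ + (R:ℂ))
    rw [show (lam - ρ) + (ρ + (R:ℂ)) = lam + (R:ℂ) from by ring] at htri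
    linarith
  have hminl : min (1/3 : ℝ) ((R-R')*lam0/(12*R*R')) ≤ 1/3 := min_le_left _ _
  have hminr : min (1/3 : ℝ) ((R-R')*lam0/(12*R*R')) ≤ (R-R')*lam0/(12*R*R') := min_le_right _ _
  have hcpos : (0:ℝ) < (R-R')*lam0/(12*R*R') := by
    apply div_pos (by nlinarith) (by positivity)
  have hmin0 : 0 ≤ min (1/3 : ℝ) ((R-R')*lam0/(12*R*R')) := le_min (by norm_num) hcpos.le
  rcases le_or_gt n (r/2) with hc | hc
  · -- |ρ| small: |lam - ρ| ≥ r/2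
    have htri : r ≤ ‖(lam - ρ)‖ + n := by
      have := norm_add_le (lam - ρ) ρ
      rw [show (lam - ρ) + ρ = lam from by ring] at this
      linarith
    have h5 : min (1/3 : ℝ) ((R-R')*lam0/(12*R*R')) * (r + n) ≤ (1/3)*(r+n) :=
      mul_le_mul_of_nonneg_right hminl (by linarith)
    linarith
  · -- |ρ| comparable: use circle bound
    have hl2 : lam0 ≤ 2*n := by linarith
    have key : (R-R')*lam0*(r+n) ≤ 6*(R-R')*n^2 := by
      have h6 : lam0*(r+n) ≤ 6*n^2 := by nlinarith
      nlinarith [h6, sub_pos.mpr hRR']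
    have hcu : (R-R')*lam0/(12*R*R') * (r+n) ≤ u := by
      rw [div_mul_eq_mul_div, div_le_iff₀ (by positivity : (0:ℝ) < 12*R*R')]
      calc (R-R')*lam0*(r+n) ≤ 6*(R-R')*n^2 := key
        _ = u * (12*R*R') := by nlinarith [huR, hn2]
    calc min (1/3 : ℝ) ((R-R')*lam0/(12*R*R')) * (r + n)
        ≤ (R-R')*lam0/(12*R*R') * (r+n) := by
          apply mul_le_mul_of_nonneg_right hminr (by positivity)
      _ ≤ u := hcu
      _ ≤ ‖(lam - ρ)‖ := h2

lemma factor_real {γ s g B : ℝ} (a₁ a₂ : ℝ) (h1 : γ*(a₁+a₂) = s*B) (h2 : γ*(a₁*a₂) = g*B)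
    (lam : ℂ) :
    (γ:ℂ)*lam^2 + ((B:ℝ):ℂ)*((s:ℂ)*lam + (g:ℂ)) = (γ:ℂ)*(lam + (a₁:ℝ))*(lam + (a₂:ℝ)) := by
  have h1C : (γ:ℂ)*((a₁:ℂ)+(a₂:ℂ)) = (s:ℂ)*(B:ℂ) := by exact_mod_cast congrArg (Complex.ofReal) h1
  have h2C : (γ:ℂ)*((a₁:ℂ)*(a₂:ℂ)) = (g:ℂ)*(B:ℂ) := by exact_mod_cast congrArg (Complex.ofReal) h2
  linear_combination -(lam * h1C) - h2C

lemma factor_complex {γ s g B : ℝ} (p b' : ℝ) (h1 : γ*(2*p) = s*B) (h2 : γ*(p^2 + b'^2) = g*B)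
    (lam : ℂ) :
    (γ:ℂ)*lam^2 + ((B:ℝ):ℂ)*((s:ℂ)*lam + (g:ℂ))
      = (γ:ℂ)*(lam - (↑(-p) + ↑b' * I))*(lam - (↑(-p) + ↑(-b') * I)) := by
  have h1C : (γ:ℂ)*(2*(p:ℂ)) = (s:ℂ)*(B:ℂ) := by exact_mod_cast congrArg (Complex.ofReal) h1
  have h2C : (γ:ℂ)*((p:ℂ)^2 + (b':ℂ)^2) = (g:ℂ)*(B:ℂ) := by
    exact_mod_cast congrArg (Complex.ofReal) h2
  have hI : (I:ℂ)^2 = -1 := Complex.I_sq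
  push_cast
  linear_combination -(lam * h1C) - h2C + (γ:ℂ)*(b':ℂ)^2*hI



lemma q_lower {γ s g lam0 R ε : ℝ} (hγ : 0 < γ) (hs : 0 < s) (hg : 0 < g) (hl0 : 0 < lam0)
    (hR : g/s < R) (hε0 : 0 < ε) (hεπ : ε < π/2) :
    ∃ cq : ℝ, 0 < cq ∧ ∀ lam : ℂ, lam ≠ 0 → |lam.arg| ≤ π - ε → lam0 ≤ ‖lam‖ →
      R^2 ≤ (lam.re + R)^2 + lam.im^2 → ∀ B : ℝ, 0 < B →
      cq * (‖lam‖ * (‖lam‖ + B)) ≤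
        ‖((γ:ℂ)*lam^2 + ((B:ℝ):ℂ)*((s:ℂ)*lam + (g:ℂ)))‖ := by
  set c₀ := Real.cos ε with hc₀
  have hc₀0 : 0 < c₀ := cos_eps_pos hε0 hεπ
  have hc₀1 : c₀ < 1 := cos_eps_lt_one hε0 hεπ
  set σ := Real.sqrt ((1-c₀)/2) with hσ
  have hσ0 : 0 < σ := Real.sqrt_pos.mpr (by linarith)
  set R' := g/s with hR'
  have hR'0 : 0 < R' := by positivity
  have hR0 : 0 < R := lt_trans hR'0 hR
  set c₅ := min (1/3 : ℝ) ((R-R')*lam0/(12*R*R')) with hc₅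
  have hc₅0 : 0 < c₅ :=
    lt_min (by norm_num) (div_pos (mul_pos (by linarith) hl0) (by positivity))
  set m := min γ s with hm
  have hm0 : 0 < m := lt_min hγ hs
  have hmγ : m ≤ γ := min_le_left _ _
  have hms : m ≤ s := min_le_right _ _
  have hmc : min σ c₅ ≤ σ := min_le_left _ _
  have hmc' : min σ c₅ ≤ c₅ := min_le_right _ _
  have hmc0 : 0 < min σ c₅ := lt_min hσ0 hc₅0
  refine ⟨m * (min σ c₅)^2, by positivity, ?_⟩
  intro lam hlam harg hr hK B hB
  set r := ‖lam‖ with hrdef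
  have hr0 : 0 < r := lt_of_lt_of_le hl0 hr
  have hx : -c₀ * r ≤ lam.re := re_ge hε0 hεπ lam hlam harg
  have t1 : m*(r*(r+B)) ≤ γ*r^2 + s*(B*r) := by
    have u1 : m*r^2 ≤ γ*r^2 := mul_le_mul_of_nonneg_right hmγ (sq_nonneg r)
    have u2 : m*(B*r) ≤ s*(B*r) :=
      mul_le_mul_of_nonneg_right hms (mul_nonneg hB.le hr0.le)
    linarith [u1, u2]
  rcases le_or_gt (4*γ*g*B) (s^2*B^2) with hreal | hcomp
  · -- real roots
    set D := Real.sqrt (s^2*B^2 - 4*γ*g*B) with hD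
    have hD0 : 0 ≤ D := Real.sqrt_nonneg _
    have hD2 : D^2 = s^2*B^2 - 4*γ*g*B := Real.sq_sqrt (by linarith)
    have hDle : D ≤ s*B := by
      apply unsquare hD0 (by positivity)
      rw [hD2]
      have h4 : 0 < γ*g*B := by positivity
      nlinarith [h4]
    set a₁ := (s*B - D)/(2*γ) with ha₁
    set a₂ := (s*B + D)/(2*γ) with ha₂
    have ha₁0 : 0 ≤ a₁ := by
      rw [ha₁]; apply div_nonneg (by linarith) (by linarith)
    have ha₂0 : 0 ≤ a₂ := by
      rw [ha₂]; apply div_nonneg (by positivity) (by linarith)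
    have hsum : γ*(a₁+a₂) = s*B := by rw [ha₁, ha₂]; field_simp; ring
    have hprod : γ*(a₁*a₂) = g*B := by
      rw [ha₁, ha₂]; field_simp; linear_combination -hD2
    have hfac := factor_real a₁ a₂ hsum hprod lam
    rw [hfac, norm_mul, norm_mul, Complex.norm_real, Real.norm_eq_abs, abs_of_pos hγ]
    have e1 : σ*(r+a₁) ≤ ‖(lam + (a₁:ℝ))‖ := sector_add hc₀0.le hc₀1 lam a₁ ha₁0 hx
    have e2 : σ*(r+a₂) ≤ ‖(lam + (a₂:ℝ))‖ := sector_add hc₀0.le hc₀1 lam a₂ ha₂0 hx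
    have ha₁a₂ : 0 ≤ a₁*a₂ := mul_nonneg ha₁0 ha₂0
    have hql : (min σ c₅)^2 ≤ σ^2 := pow_le_pow_left₀ hmc0.le hmc 2
    have step1 : m*(min σ c₅)^2*(r*(r+B)) ≤ σ^2*(γ*r^2 + s*(B*r)) := by
      calc m*(min σ c₅)^2*(r*(r+B)) ≤ m*σ^2*(r*(r+B)) := by
            apply mul_le_mul_of_nonneg_right
              (mul_le_mul_of_nonneg_left hql hm0.le) (by positivity)
        _ = σ^2*(m*(r*(r+B))) := by ring
        _ ≤ σ^2*(γ*r^2 + s*(B*r)) := mul_le_mul_of_nonneg_left t1 (sq_nonneg σ)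
    have step2 : σ^2*(γ*r^2 + s*(B*r)) ≤ γ*(σ*(r+a₁))*(σ*(r+a₂)) := by
      have expand : γ*(σ*(r+a₁))*(σ*(r+a₂)) = σ^2*(γ*r^2 + (γ*(a₁+a₂))*r + γ*(a₁*a₂)) := by ring
      rw [expand, hsum, hprod]
      have inner : γ*r^2 + s*(B*r) ≤ γ*r^2 + s*B*r + g*B := by
        linarith [mul_nonneg hg.le hB.le]
      exact mul_le_mul_of_nonneg_left inner (sq_nonneg σ)
    calc m*(min σ c₅)^2*(r*(r+B)) ≤ γ*(σ*(r+a₁))*(σ*(r+a₂)) := le_trans step1 step2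
      _ ≤ γ * ‖(lam + (a₁:ℝ))‖ * ‖(lam + (a₂:ℝ))‖ := by
          gcongr <;> positivity
  · -- complex roots
    set D := Real.sqrt (4*γ*g*B - s^2*B^2) with hD
    have hD0 : 0 ≤ D := Real.sqrt_nonneg _
    have hD2 : D^2 = 4*γ*g*B - s^2*B^2 := Real.sq_sqrt (by linarith)
    set p := s*B/(2*γ) with hp'
    have hp : 0 < p := by rw [hp']; positivity
    set b' := D/(2*γ) with hb'
    have h1 : γ*(2*p) = s*B := by rw [hp']; field_simp
    have h2 : γ*(p^2 + b'^2) = g*B := by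
      rw [hp', hb']; field_simp; linear_combination hD2
    have hcirc : p^2 + b'^2 = 2*R'*p := by
      have e : 2*R'*p = g*B/γ := by rw [hR', hp']; field_simp
      rw [e, eq_div_iff (ne_of_gt hγ)]; linarith [h2]
    have hcirc' : p^2 + (-b')^2 = 2*R'*p := by rw [neg_sq]; exact hcirc
    have dist₁ := dist_root hR'0 hR hl0 lam hK hr p b' hp hcirc
    have dist₂ := dist_root hR'0 hR hl0 lam hK hr p (-b') hp hcirc'
    rw [← hc₅] at dist₁ dist₂
    have hfac := factor_complex p b' h1 h2 lam
    rw [hfac, norm_mul, norm_mul, Complex.norm_real, Real.norm_eq_abs, abs_of_pos hγ]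
    set ρ₁ : ℂ := (↑(-p) + ↑b' * I) with hρ₁
    set ρ₂ : ℂ := (↑(-p) + ↑(-b') * I) with hρ₂
    set n₁ := ‖ρ₁‖ with hn₁
    set n₂ := ‖ρ₂‖ with hn₂
    have hn₁0 : 0 ≤ n₁ := norm_nonneg _
    have hn₂0 : 0 ≤ n₂ := norm_nonneg _
    have hρ₁re : ρ₁.re = -p := by simp [hρ₁]
    have hρ₂re : ρ₂.re = -p := by simp [hρ₂]
    have hpn₁ : p ≤ n₁ := by
      have := Complex.abs_re_le_norm ρ₁
      rwa [hρ₁re, abs_neg, abs_of_pos hp] at this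
    have hpn₂ : p ≤ n₂ := by
      have := Complex.abs_re_le_norm ρ₂
      rwa [hρ₂re, abs_neg, abs_of_pos hp] at this
    have hql2 : (min σ c₅)^2 ≤ c₅^2 := pow_le_pow_left₀ hmc0.le hmc' 2
    have step1 : m*(min σ c₅)^2*(r*(r+B)) ≤ c₅^2*(γ*r^2 + s*(B*r)) := by
      calc m*(min σ c₅)^2*(r*(r+B)) ≤ m*c₅^2*(r*(r+B)) := by
            apply mul_le_mul_of_nonneg_right
              (mul_le_mul_of_nonneg_left hql2 hm0.le) (by positivity)
        _ = c₅^2*(m*(r*(r+B))) := by ring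
        _ ≤ c₅^2*(γ*r^2 + s*(B*r)) := mul_le_mul_of_nonneg_left t1 (sq_nonneg c₅)
    have step2 : c₅^2*(γ*r^2 + s*(B*r)) ≤ γ*(c₅*(r+n₁))*(c₅*(r+n₂)) := by
      have hBs : s*(B*r) = γ*(2*p)*r := by rw [h1]; ring
      have inner : γ*r^2 + s*(B*r) ≤ γ*r^2 + γ*(n₁+n₂)*r + γ*(n₁*n₂) := by
        rw [hBs]
        have e1 : γ*(2*p)*r ≤ γ*(n₁+n₂)*r := by
          apply mul_le_mul_of_nonneg_right _ hr0.le
          exact mul_le_mul_of_nonneg_left (by linarith) hγ.le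
        linarith [e1, mul_nonneg (mul_nonneg hγ.le hn₁0) hn₂0]
      calc c₅^2*(γ*r^2 + s*(B*r)) ≤ c₅^2*(γ*r^2 + γ*(n₁+n₂)*r + γ*(n₁*n₂)) :=
            mul_le_mul_of_nonneg_left inner (sq_nonneg c₅)
        _ = γ*(c₅*(r+n₁))*(c₅*(r+n₂)) := by ring
    calc m*(min σ c₅)^2*(r*(r+B)) ≤ γ*(c₅*(r+n₁))*(c₅*(r+n₂)) := le_trans step1 step2
      _ ≤ γ * ‖(lam - ρ₁)‖ * ‖(lam - ρ₂)‖ := by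
          apply mul_le_mul (mul_le_mul_of_nonneg_left dist₁ hγ.le) dist₂
            (by positivity) (mul_nonneg hγ.le (norm_nonneg _))


lemma Bgen_est {ε μ γ1 : ℝ} (hε0 : 0 < ε) (hεπ : ε < π/2) (hμ : 0 < μ) (hγ : 0 < γ1) :
    ∃ c C : ℝ, 0 < c ∧ 0 < C ∧ ∀ lam : ℂ, lam ≠ 0 → |lam.arg| ≤ π - ε → ∀ A : ℝ, 0 < A →
      (c * (Real.sqrt (‖lam‖) + A) ≤ ‖(Bgen μ γ1 lam A)‖
      ∧ ‖(Bgen μ γ1 lam A)‖ ≤ C * (Real.sqrt (‖lam‖) + A))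
      ∧ Real.sqrt ((1 - Real.cos ε)/2) * ‖(Bgen μ γ1 lam A)‖
          ≤ (Bgen μ γ1 lam A).re := by
  set c₀ := Real.cos ε with hc₀
  have hc₀0 : 0 < c₀ := cos_eps_pos hε0 hεπ
  have hc₀1 : c₀ < 1 := cos_eps_lt_one hε0 hεπ
  set σ := Real.sqrt ((1-c₀)/2) with hσdef
  have hσ0 : 0 < σ := Real.sqrt_pos.mpr (by linarith)
  set ζ := γ1/μ with hζ
  have hζ0 : 0 < ζ := by positivity
  refine ⟨Real.sqrt (σ * min ζ 1) / Real.sqrt 2, Real.sqrt (max ζ 1), ?_, ?_, ?_⟩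
  · have : (0:ℝ) < min ζ 1 := lt_min hζ0 one_pos
    positivity
  · have : (0:ℝ) < max ζ 1 := lt_of_lt_of_le one_pos (le_max_right _ _)
    positivity
  intro lam hlam harg A hA
  set r := ‖lam‖ with hrdef
  have hr0 : 0 < r := norm_pos_iff.mpr hlam
  have hx : -c₀ * r ≤ lam.re := re_ge hε0 hεπ lam hlam harg
  set B := A^2 with hB'
  have hB0 : 0 < B := by positivity
  set W : ℂ := (γ1:ℂ)*(μ:ℂ)⁻¹*lam + (A:ℂ)^2 with hW
  have hBg : Bgen μ γ1 lam A = W ^ (1/2:ℂ) := rfl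
  have hWeq : W = (ζ:ℂ)*lam + ((B:ℝ):ℂ) := by
    rw [hW, hζ, hB']; push_cast; ring
  have habsζ : ‖((ζ:ℂ)*lam)‖ = ζ * r := by
    rw [norm_mul, Complex.norm_real, Real.norm_eq_abs, abs_of_pos hζ0]
  have hreζre : ((ζ:ℂ)*lam).re = ζ * lam.re := by
    simp [Complex.mul_re]
  have hreζim : ((ζ:ℂ)*lam).im = ζ * lam.im := by
    simp [Complex.mul_im]
  have hreζ : -c₀ * ‖((ζ:ℂ)*lam)‖ ≤ ((ζ:ℂ)*lam).re := by
    rw [habsζ, hreζre]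
    have := mul_le_mul_of_nonneg_left hx hζ0.le
    linarith [this]
  have hWlow : σ * (ζ*r + B) ≤ ‖W‖ := by
    have h := sector_add hc₀0.le hc₀1 ((ζ:ℂ)*lam) B hB0.le hreζ
    rw [habsζ] at h
    rw [hWeq]
    exact h
  have hWhigh : ‖W‖ ≤ ζ*r + B := by
    rw [hWeq]
    calc ‖((ζ:ℂ)*lam + ((B:ℝ):ℂ))‖
        ≤ ‖((ζ:ℂ)*lam)‖ + ‖((B:ℝ):ℂ)‖ := norm_add_le _ _
      _ = ζ*r + B := by rw [habsζ, Complex.norm_real, Real.norm_eq_abs, abs_of_pos hB0]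
  have hWre : W.re = ζ*lam.re + B := by
    rw [hWeq]; simp [hreζre]
  have hWim : W.im = ζ*lam.im := by
    rw [hWeq]; simp [hreζim]
  have hreW : -c₀ * ‖W‖ ≤ W.re := by
    rcases le_or_gt 0 W.re with h | h
    · have : 0 ≤ c₀ * ‖W‖ := by positivity
      linarith
    · have hx0 : lam.re < 0 := by
        by_contra hcon
        push_neg at hcon
        have := mul_nonneg hζ0.le hcon
        rw [hWre] at h
        linarith
      have h1 : lam.re^2 + lam.im^2 = r^2 := by
        rw [hrdef, Complex.sq_norm, Complex.normSq_apply]; ring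
      have hx2 : lam.re^2 ≤ c₀^2*r^2 := by nlinarith [hx, hx0, hc₀0, hr0]
      have hy2 : (1-c₀^2)*r^2 ≤ lam.im^2 := by nlinarith [h1, hx2]
      have hWre2 : W.re^2 ≤ c₀^2 * (‖W‖)^2 := by
        have hW2 : (‖W‖)^2 = W.re^2 + W.im^2 := by
          rw [Complex.sq_norm, Complex.normSq_apply]; ring
        rw [hW2, hWre, hWim]
        have e0 : 0 < -(ζ*lam.re + B) := by rw [hWre] at h; linarith
        have e1 : -(ζ*lam.re + B) ≤ ζ*(c₀*r) := by
          have := mul_le_mul_of_nonneg_left hx hζ0.le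
          nlinarith [this, hB0]
        have e2 : (ζ*lam.re+B)^2 ≤ ζ^2*(c₀^2*r^2) := by nlinarith [e0, e1]
        have e3 : c₀^2*ζ^2*((1-c₀^2)*r^2) ≤ c₀^2*ζ^2*lam.im^2 :=
          mul_le_mul_of_nonneg_left hy2 (by positivity)
        have e4 : (0:ℝ) ≤ 1 - c₀^2 := by nlinarith [hc₀0, hc₀1]
        have e5 := mul_le_mul_of_nonneg_left e2 e4
        linarith [e5, e3]
      nlinarith [hWre2, norm_nonneg W, hc₀0, mul_pos hc₀0 (lt_of_lt_of_le (by positivity : (0:ℝ) < σ*(ζ*r+B)) hWlow)]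
  refine ⟨⟨?_, ?_⟩, ?_⟩
  · rw [hBg, abs_pow_half]
    have hmin0 : (0:ℝ) < min ζ 1 := lt_min hζ0 one_pos
    have h1 : (σ * min ζ 1) * (r + B) ≤ ‖W‖ := by
      have e1 : min ζ 1 * r ≤ ζ * r := mul_le_mul_of_nonneg_right (min_le_left _ _) hr0.le
      have e2 : min ζ 1 * B ≤ 1 * B := mul_le_mul_of_nonneg_right (min_le_right _ _) hB0.le
      have e3 : σ*(min ζ 1 * (r+B)) ≤ σ*(ζ*r + B) := by
        apply mul_le_mul_of_nonneg_left _ hσ0.le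
        linarith [e1, e2]
      calc (σ * min ζ 1) * (r + B) = σ*(min ζ 1 * (r+B)) := by ring
        _ ≤ σ*(ζ*r + B) := e3
        _ ≤ ‖W‖ := hWlow
    have h2 : Real.sqrt (σ * min ζ 1) * Real.sqrt (r + B) ≤ Real.sqrt (‖W‖) :=
      sqrt_mono_mul (by positivity) (by positivity) h1
    have h3 := (sqrt_split r A hr0.le hA.le).1
    calc Real.sqrt (σ * min ζ 1) / Real.sqrt 2 * (Real.sqrt r + A)
        ≤ Real.sqrt (σ * min ζ 1) / Real.sqrt 2 * (Real.sqrt 2 * Real.sqrt (r + B)) := by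
          apply mul_le_mul_of_nonneg_left _ (by positivity)
          rw [hB']; exact h3
      _ = Real.sqrt (σ * min ζ 1) * Real.sqrt (r + B) := by
          rw [← mul_assoc, div_mul_cancel₀ _ (by positivity : Real.sqrt 2 ≠ 0)]
      _ ≤ Real.sqrt (‖W‖) := h2
  · rw [hBg, abs_pow_half]
    have hmax0 : (0:ℝ) < max ζ 1 := lt_of_lt_of_le one_pos (le_max_right _ _)
    have h1 : ‖W‖ ≤ max ζ 1 * (r + B) := by
      have e1 : ζ * r ≤ max ζ 1 * r := mul_le_mul_of_nonneg_right (le_max_left _ _) hr0.le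
      have e2 : 1 * B ≤ max ζ 1 * B := mul_le_mul_of_nonneg_right (le_max_right _ _) hB0.le
      linarith [hWhigh, e1, e2]
    have h2 : Real.sqrt (‖W‖) ≤ Real.sqrt (max ζ 1) * Real.sqrt (r + B) :=
      sqrt_mono_mul' hmax0.le (by positivity) h1
    have h3 := (sqrt_split r A hr0.le hA.le).2
    calc Real.sqrt (‖W‖) ≤ Real.sqrt (max ζ 1) * Real.sqrt (r + B) := h2
      _ ≤ Real.sqrt (max ζ 1) * (Real.sqrt r + A) := by
          apply mul_le_mul_of_nonneg_left _ (by positivity)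
          rw [hB']; exact h3
  · rw [hBg]
    exact re_pow_half_ge hc₀1 W hreW


lemma Aplus_est {ε μp νp γ1p γ2p lam0 : ℝ} (hε0 : 0 < ε) (hεπ : ε < π/2) (hμp : 0 < μp)
    (hν : 0 < νp) (hγ1p : 0 < γ1p) (hγ2 : 0 < γ2p) (hl0 : 0 < lam0) :
    ∃ c C : ℝ, 0 < c ∧ 0 < C ∧ ∀ lam ∈ GammaReg ε lam0 γ1p γ2p νp, ∀ A : ℝ, 0 < A →
      c * (Real.sqrt (‖lam‖) + A) ≤ ‖(Aplus μp νp γ1p γ2p lam A)‖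
      ∧ ‖(Aplus μp νp γ1p γ2p lam A)‖ ≤ C * (Real.sqrt (‖lam‖) + A) := by
  have hs : 0 < μp + νp := by linarith
  have hg : 0 < γ1p*γ2p := by positivity
  have hRR' : (γ1p*γ2p)/(μp+νp) < γ1p*γ2p/νp + ε := by
    have h1 : (γ1p*γ2p)/(μp+νp) < (γ1p*γ2p)/νp := by
      apply div_lt_div_of_pos_left hg hν (by linarith)
    linarith
  obtain ⟨cq, hcq0, hcq⟩ := q_lower hγ1p hs hg hl0 hRR' hε0 hεπ
  set c₀ := Real.cos ε with hc₀
  have hc₀0 : 0 < c₀ := cos_eps_pos hε0 hεπ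
  have hc₀1 : c₀ < 1 := cos_eps_lt_one hε0 hεπ
  set σ := Real.sqrt ((1-c₀)/2) with hσdef
  have hσ0 : 0 < σ := Real.sqrt_pos.mpr (by linarith)
  set CV := (μp+νp) + (γ1p*γ2p)/lam0 with hCV
  have hCV0 : 0 < CV := by rw [hCV]; positivity
  set Cq := γ1p + CV with hCq
  have hCq0 : 0 < Cq := by rw [hCq]; linarith
  set cV := σ*(μp+νp) with hcV
  have hcV0 : 0 < cV := mul_pos hσ0 hs
  refine ⟨Real.sqrt (cq/CV) / Real.sqrt 2, Real.sqrt (Cq/cV), ?_, ?_, ?_⟩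
  · have h := div_pos hcq0 hCV0
    positivity
  · have h := div_pos hCq0 hcV0
    positivity
  intro lam hmem A hA
  simp only [GammaReg, SigmaSecTr, SigmaSec, Kreg, Set.mem_inter_iff, Set.mem_setOf_eq,
    Set.mem_sep_iff] at hmem
  obtain ⟨⟨⟨hne, harg⟩, hrl⟩, hK⟩ := hmem
  set r := ‖lam‖ with hrdef
  have hr0 : 0 < r := lt_of_lt_of_le hl0 hrl
  have hx : -c₀ * r ≤ lam.re := re_ge hε0 hεπ lam hne harg
  set B := A^2 with hB'
  have hB0 : 0 < B := by rw [hB']; positivity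
  have hK' : (γ1p*γ2p/νp + ε)^2 ≤ (lam.re + (γ1p*γ2p/νp + ε))^2 + lam.im^2 := by
    have h := hK
    ring_nf at h ⊢
    linarith [h]
  set v : ℂ := ((μp+νp:ℝ):ℂ)*lam + ((γ1p*γ2p:ℝ):ℂ) with hv
  set qC : ℂ := (γ1p:ℂ)*lam^2 + ((B:ℝ):ℂ)*v with hqC
  have hqlow : cq * (r*(r+B)) ≤ ‖qC‖ := by
    rw [hqC, hv]
    exact hcq lam hne harg hrl hK' B hB0
  have habs_s : ‖(((μp+νp:ℝ):ℂ)*lam)‖ = (μp+νp)*r := by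
    rw [norm_mul, Complex.norm_real, Real.norm_eq_abs, abs_of_pos hs]
  have hres : -c₀ * ‖(((μp+νp:ℝ):ℂ)*lam)‖ ≤ (((μp+νp:ℝ):ℂ)*lam).re := by
    rw [habs_s]
    have e : (((μp+νp:ℝ):ℂ)*lam).re = (μp+νp)*lam.re := by simp [Complex.mul_re]
    rw [e]
    have := mul_le_mul_of_nonneg_left hx hs.le
    linarith
  have hvlow : σ*((μp+νp)*r + γ1p*γ2p) ≤ ‖v‖ := by
    have h := sector_add hc₀0.le hc₀1 (((μp+νp:ℝ):ℂ)*lam) (γ1p*γ2p) hg.le hres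
    rw [habs_s] at h
    rw [hv]
    exact h
  have hvpos : 0 < ‖v‖ :=
    lt_of_lt_of_le (mul_pos hσ0 (by positivity)) hvlow
  have hv0 : v ≠ 0 := norm_pos_iff.mp hvpos
  have hvhigh1 : ‖v‖ ≤ (μp+νp)*r + γ1p*γ2p := by
    rw [hv]
    calc ‖(((μp+νp:ℝ):ℂ)*lam + ((γ1p*γ2p:ℝ):ℂ))‖
        ≤ ‖(((μp+νp:ℝ):ℂ)*lam)‖ + ‖((γ1p*γ2p:ℝ):ℂ)‖ :=
          norm_add_le _ _
      _ = (μp+νp)*r + γ1p*γ2p := by rw [habs_s, Complex.norm_real, Real.norm_eq_abs, abs_of_pos hg]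
  have hglr : γ1p*γ2p ≤ (γ1p*γ2p)/lam0 * r := by
    rw [div_mul_eq_mul_div, le_div_iff₀ hl0]
    exact mul_le_mul_of_nonneg_left hrl hg.le
  have hvhigh : ‖v‖ ≤ CV*r := by
    rw [hCV]
    linarith [hvhigh1, hglr]
  have hvlow' : cV*r ≤ ‖v‖ := by
    rw [hcV]
    linarith [hvlow, mul_pos hσ0 hg]
  set WA : ℂ := (γ1p:ℂ) * ((μp:ℂ) + (νp:ℂ) + deltaC γ1p γ2p lam)⁻¹ * lam + (A:ℂ)^2 with hWA
  have hApEq : Aplus μp νp γ1p γ2p lam A = WA ^ (1/2:ℂ) := rfl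
  have hBC : ((B:ℝ):ℂ) = (A:ℂ)^2 := by rw [hB']; push_cast; ring
  have hwv : ((μp:ℂ) + (νp:ℂ) + deltaC γ1p γ2p lam) = v / lam := by
    rw [hv]; unfold deltaC; push_cast; field_simp
  have hWAv : WA * v = qC := by
    rw [hWA, hqC, hwv, hBC]
    field_simp
  have habsq : ‖qC‖ = ‖WA‖ * ‖v‖ := by
    rw [← hWAv, norm_mul]
  have hWAlow : (cq/CV)*(r+B) ≤ ‖WA‖ := by
    have h1 : cq*(r*(r+B)) ≤ ‖WA‖ * (CV*r) := by
      calc cq*(r*(r+B)) ≤ ‖qC‖ := hqlow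
        _ = ‖WA‖ * ‖v‖ := habsq
        _ ≤ ‖WA‖ * (CV*r) :=
            mul_le_mul_of_nonneg_left hvhigh (norm_nonneg _)
    have h2 : (cq/CV)*(r+B)*(CV*r) = cq*(r*(r+B)) := by field_simp
    have h3 : (cq/CV)*(r+B)*(CV*r) ≤ ‖WA‖*(CV*r) := by rw [h2]; exact h1
    exact le_of_mul_le_mul_right h3 (by positivity)
  have hqhigh : ‖qC‖ ≤ Cq*(r*(r+B)) := by
    have h1 : ‖qC‖ ≤ γ1p*r^2 + B*((μp+νp)*r + γ1p*γ2p) := by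
      have t1 : ‖qC‖ ≤ ‖((γ1p:ℂ)*lam^2)‖ + ‖(((B:ℝ):ℂ)*v)‖ := by
        rw [hqC]; exact norm_add_le _ _
      have t2 : ‖((γ1p:ℂ)*lam^2)‖ = γ1p*r^2 := by
        rw [norm_mul, norm_pow, Complex.norm_real, Real.norm_eq_abs, abs_of_pos hγ1p, hrdef]
      have t3 : ‖(((B:ℝ):ℂ)*v)‖ = B*‖v‖ := by
        rw [norm_mul, Complex.norm_real, Real.norm_eq_abs, abs_of_pos hB0]
      have t4 : B*‖v‖ ≤ B*((μp+νp)*r + γ1p*γ2p) :=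
        mul_le_mul_of_nonneg_left hvhigh1 hB0.le
      linarith [t1, t2.le, t3.le, t4]
    have h2 : γ1p*r^2 + B*((μp+νp)*r + γ1p*γ2p) ≤ Cq*(r*(r+B)) := by
      rw [hCq, hCV]
      have e1 := mul_le_mul_of_nonneg_right hglr hB0.le
      linarith [e1, mul_nonneg (mul_nonneg hγ1p.le hr0.le) hB0.le,
        mul_nonneg hs.le (sq_nonneg r),
        mul_nonneg (div_nonneg hg.le hl0.le) (sq_nonneg r)]
    linarith
  have hWAhigh : ‖WA‖ ≤ (Cq/cV)*(r+B) := by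
    have e1 : ‖WA‖ * (cV*r) ≤ ‖WA‖ * ‖v‖ :=
      mul_le_mul_of_nonneg_left hvlow' (norm_nonneg _)
    have e2 : (Cq/cV)*(r+B)*(cV*r) = Cq*(r*(r+B)) := by field_simp
    have h1 : ‖WA‖ * (cV*r) ≤ (Cq/cV)*(r+B)*(cV*r) := by
      rw [e2]; linarith [e1, habsq, hqhigh]
    exact le_of_mul_le_mul_right h1 (by positivity)
  constructor
  · rw [hApEq, abs_pow_half]
    have h2 : Real.sqrt (cq/CV) * Real.sqrt (r+B) ≤ Real.sqrt (‖WA‖) :=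
      sqrt_mono_mul (div_nonneg hcq0.le hCV0.le) (by positivity) hWAlow
    have h3 := (sqrt_split r A hr0.le hA.le).1
    calc Real.sqrt (cq/CV) / Real.sqrt 2 * (Real.sqrt r + A)
        ≤ Real.sqrt (cq/CV) / Real.sqrt 2 * (Real.sqrt 2 * Real.sqrt (r + B)) := by
          apply mul_le_mul_of_nonneg_left _ (by positivity)
          rw [hB']; exact h3
      _ = Real.sqrt (cq/CV) * Real.sqrt (r + B) := by
          rw [← mul_assoc, div_mul_cancel₀ _ (by positivity : Real.sqrt 2 ≠ 0)]
      _ ≤ Real.sqrt (‖WA‖) := h2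
  · rw [hApEq, abs_pow_half]
    have h2 : Real.sqrt (‖WA‖) ≤ Real.sqrt (Cq/cV) * Real.sqrt (r+B) :=
      sqrt_mono_mul' (div_nonneg hCq0.le hcV0.le) (by positivity) hWAhigh
    have h3 := (sqrt_split r A hr0.le hA.le).2
    calc Real.sqrt (‖WA‖) ≤ Real.sqrt (Cq/cV) * Real.sqrt (r + B) := h2
      _ ≤ Real.sqrt (Cq/cV) * (Real.sqrt r + A) := by
          apply mul_le_mul_of_nonneg_left _ (by positivity)
          rw [hB']; exact h3


lemma re_real_mul (t : ℝ) (z : ℂ) : ((t:ℂ)*z).re = t*z.re := by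
  simp [Complex.mul_re]

lemma abs_real_mul {t : ℝ} (ht : 0 < t) (z : ℂ) :
    ‖((t:ℂ)*z)‖ = t * ‖z‖ := by
  rw [norm_mul, Complex.norm_real, Real.norm_eq_abs, abs_of_pos ht]

end St3Aux


/-- Equivalence of each of `A₊, B₊, B₋, A₊+B₊, μ₊B₊+μ₋B₋`
with `|λ|^{1/2} + |ξ′|` on `Γ_{ε,λ0} × (ℝ^{N−1} \ {0})`. -/
theorem statement3 (N : ℕ) (hN : 2 ≤ N) (ε μp μm νp γ1p γ1m γ2p lam0 : ℝ)
    (hε0 : 0 < ε) (hεπ : ε < π / 2)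
    (hμp : 0 < μp) (hμm : 0 < μm) (hν : 0 < νp)
    (hγ1p : 0 < γ1p) (hγ1m : 0 < γ1m) (hγ2 : 0 < γ2p) (hl0 : 0 < lam0) :
    ∃ c C : ℝ, 0 < c ∧ 0 < C ∧
      ∀ lam ∈ GammaReg ε lam0 γ1p γ2p νp,
        ∀ ξ : EuclideanSpace ℝ (Fin (N - 1)), ξ ≠ 0 →
          ∀ M ∈ ({Aplus μp νp γ1p γ2p lam ‖ξ‖,
                  Bgen μp γ1p lam ‖ξ‖,
                  Bgen μm γ1m lam ‖ξ‖,
                  Aplus μp νp γ1p γ2p lam ‖ξ‖ + Bgen μp γ1p lam ‖ξ‖,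
                  (μp : ℂ) * Bgen μp γ1p lam ‖ξ‖ + (μm : ℂ) * Bgen μm γ1m lam ‖ξ‖} :
              Set ℂ),
            c * (Real.sqrt (‖lam‖) + ‖ξ‖) ≤ ‖M‖ ∧
              ‖M‖ ≤ C * (Real.sqrt (‖lam‖) + ‖ξ‖) := by
  classical
  obtain ⟨c₁, C₁, hc₁, hC₁, hAP⟩ := St3Aux.Aplus_est hε0 hεπ hμp hν hγ1p hγ2 hl0
  obtain ⟨c₂, C₂, hc₂, hC₂, hBP⟩ := St3Aux.Bgen_est (ε := ε) hε0 hεπ hμp hγ1p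
  obtain ⟨c₃, C₃, hc₃, hC₃, hBM⟩ := St3Aux.Bgen_est (ε := ε) hε0 hεπ hμm hγ1m
  set c₀ := Real.cos ε with hc₀def
  have hc₀0 : 0 < c₀ := St3Aux.cos_eps_pos hε0 hεπ
  have hc₀1 : c₀ < 1 := St3Aux.cos_eps_lt_one hε0 hεπ
  set σB := Real.sqrt ((1 - c₀)/2) with hσB
  have hσB0 : 0 < σB := Real.sqrt_pos.mpr (by linarith)
  have hσB1 : σB ≤ 1 := by
    rw [hσB]
    calc Real.sqrt ((1-c₀)/2) ≤ Real.sqrt 1 := Real.sqrt_le_sqrt (by linarith)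
      _ = 1 := Real.sqrt_one
  set δ₀ := Real.sqrt (1 - σB^2) with hδ₀
  have hδ₀0 : 0 ≤ δ₀ := Real.sqrt_nonneg _
  have hδ₀2 : δ₀^2 = 1 - σB^2 := Real.sq_sqrt (by nlinarith)
  have hδ₀1 : δ₀ < 1 := by nlinarith
  set s₀ := Real.sqrt ((1 - δ₀)/2) with hs₀
  have hs₀0 : 0 < s₀ := Real.sqrt_pos.mpr (by linarith)
  set c := min c₁ (min c₂ (min c₃ (min (s₀*c₁) (s₀*(μp*c₂))))) with hc
  set C := max C₁ (max C₂ (max C₃ (max (C₁+C₂) (μp*C₂ + μm*C₃)))) with hC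
  have hc0 : 0 < c := by
    apply lt_min hc₁
    apply lt_min hc₂
    apply lt_min hc₃
    exact lt_min (mul_pos hs₀0 hc₁) (mul_pos hs₀0 (mul_pos hμp hc₂))
  have hC0 : 0 < C := lt_of_lt_of_le hC₁ (le_max_left _ _)
  refine ⟨c, C, hc0, hC0, ?_⟩
  intro lam hmem ξ hξ M hM
  have hmem' := hmem
  simp only [GammaReg, SigmaSecTr, SigmaSec, Kreg, Set.mem_inter_iff, Set.mem_setOf_eq,
    Set.mem_sep_iff] at hmem'
  obtain ⟨⟨⟨hne, harg⟩, hrl⟩, hK⟩ := hmem'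
  set A := ‖ξ‖ with hAdef
  have hA : 0 < A := by rw [hAdef]; exact norm_pos_iff.mpr hξ
  set r := ‖lam‖ with hrdef
  have hr0 : 0 < r := lt_of_lt_of_le hl0 hrl
  have hrA : 0 < Real.sqrt r + A := by positivity
  -- basic bounds
  obtain ⟨hA1, hA2⟩ := hAP lam hmem A hA
  obtain ⟨⟨hB1, hB2⟩, hB3⟩ := hBP lam hne harg A hA
  obtain ⟨⟨hB1', hB2'⟩, hB3'⟩ := hBM lam hne harg A hA
  -- inequalities between global and local constants
  have hcle1 : c ≤ c₁ := min_le_left _ _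
  have hcle2 : c ≤ c₂ := le_trans (min_le_right _ _) (min_le_left _ _)
  have hcle3 : c ≤ c₃ :=
    le_trans (min_le_right _ _) (le_trans (min_le_right _ _) (min_le_left _ _))
  have hcle4 : c ≤ s₀*c₁ :=
    le_trans (min_le_right _ _) (le_trans (min_le_right _ _)
      (le_trans (min_le_right _ _) (min_le_left _ _)))
  have hcle5 : c ≤ s₀*(μp*c₂) :=
    le_trans (min_le_right _ _) (le_trans (min_le_right _ _)
      (le_trans (min_le_right _ _) (min_le_right _ _)))
  have hCge1 : C₁ ≤ C := le_max_left _ _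
  have hCge2 : C₂ ≤ C := le_trans (le_max_left _ _) (le_max_right _ _)
  have hCge3 : C₃ ≤ C :=
    le_trans (le_max_left _ _) (le_trans (le_max_right _ _) (le_max_right _ _))
  have hCge4 : C₁+C₂ ≤ C :=
    le_trans (le_max_left _ _) (le_trans (le_max_right _ _)
      (le_trans (le_max_right _ _) (le_max_right _ _)))
  have hCge5 : μp*C₂ + μm*C₃ ≤ C :=
    le_trans (le_max_right _ _) (le_trans (le_max_right _ _)
      (le_trans (le_max_right _ _) (le_max_right _ _)))
  simp only [Set.mem_insert_iff, Set.mem_singleton_iff] at hM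
  rcases hM with rfl | rfl | rfl | rfl | rfl
  · exact ⟨le_trans (mul_le_mul_of_nonneg_right hcle1 hrA.le) hA1,
      le_trans hA2 (mul_le_mul_of_nonneg_right hCge1 hrA.le)⟩
  · exact ⟨le_trans (mul_le_mul_of_nonneg_right hcle2 hrA.le) hB1,
      le_trans hB2 (mul_le_mul_of_nonneg_right hCge2 hrA.le)⟩
  · exact ⟨le_trans (mul_le_mul_of_nonneg_right hcle3 hrA.le) hB1',
      le_trans hB2' (mul_le_mul_of_nonneg_right hCge3 hrA.le)⟩
  · -- A+ + B+
    have hReA : 0 ≤ (Aplus μp νp γ1p γ2p lam A).re := St3Aux.re_pow_half_nonneg _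
    have hsum := St3Aux.sum_lower hσB0 hσB1 (Aplus μp νp γ1p γ2p lam A)
      (Bgen μp γ1p lam A) hReA hB3
    constructor
    · have h1 : c*(Real.sqrt r + A) ≤ s₀*c₁*(Real.sqrt r + A) :=
        mul_le_mul_of_nonneg_right hcle4 hrA.le
      have h2 : s₀*c₁*(Real.sqrt r + A) ≤ s₀*‖(Aplus μp νp γ1p γ2p lam A)‖ := by
        have := mul_le_mul_of_nonneg_left hA1 hs₀0.le
        calc s₀*c₁*(Real.sqrt r + A) = s₀*(c₁*(Real.sqrt r + A)) := by ring
          _ ≤ s₀*‖(Aplus μp νp γ1p γ2p lam A)‖ := this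
      have h3 : s₀*‖(Aplus μp νp γ1p γ2p lam A)‖
          ≤ s₀*(‖(Aplus μp νp γ1p γ2p lam A)‖ + ‖(Bgen μp γ1p lam A)‖) := by
        apply mul_le_mul_of_nonneg_left _ hs₀0.le
        linarith [norm_nonneg (Bgen μp γ1p lam A)]
      calc c*(Real.sqrt r + A) ≤ s₀*(‖(Aplus μp νp γ1p γ2p lam A)‖
            + ‖(Bgen μp γ1p lam A)‖) := by linarith
        _ ≤ ‖(Aplus μp νp γ1p γ2p lam A + Bgen μp γ1p lam A)‖ := hsum
    · calc ‖(Aplus μp νp γ1p γ2p lam A + Bgen μp γ1p lam A)‖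
          ≤ ‖(Aplus μp νp γ1p γ2p lam A)‖ + ‖(Bgen μp γ1p lam A)‖ :=
            norm_add_le _ _
        _ ≤ (C₁+C₂)*(Real.sqrt r + A) := by linarith
        _ ≤ C*(Real.sqrt r + A) := mul_le_mul_of_nonneg_right hCge4 hrA.le
  · -- μp B+ + μm B−
    set a : ℂ := (μp:ℂ) * Bgen μp γ1p lam A with ha
    set b : ℂ := (μm:ℂ) * Bgen μm γ1m lam A with hb
    have hare : 0 ≤ a.re := by
      rw [ha, St3Aux.re_real_mul]
      have h0 : 0 ≤ (Bgen μp γ1p lam A).re := St3Aux.re_pow_half_nonneg _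
      exact mul_nonneg hμp.le h0
    have habs_a : ‖a‖ = μp * ‖(Bgen μp γ1p lam A)‖ := by
      rw [ha]; exact St3Aux.abs_real_mul hμp _
    have habs_b : ‖b‖ = μm * ‖(Bgen μm γ1m lam A)‖ := by
      rw [hb]; exact St3Aux.abs_real_mul hμm _
    have hbre : σB * ‖b‖ ≤ b.re := by
      rw [hb, St3Aux.re_real_mul, St3Aux.abs_real_mul hμm]
      have := mul_le_mul_of_nonneg_left hB3' hμm.le
      calc σB*(μm*‖(Bgen μm γ1m lam A)‖)
          = μm*(σB*‖(Bgen μm γ1m lam A)‖) := by ring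
        _ ≤ μm*(Bgen μm γ1m lam A).re := this
    have hsum := St3Aux.sum_lower hσB0 hσB1 a b hare hbre
    constructor
    · have h1 : c*(Real.sqrt r + A) ≤ s₀*(μp*c₂)*(Real.sqrt r + A) :=
        mul_le_mul_of_nonneg_right hcle5 hrA.le
      have h2 : s₀*(μp*c₂)*(Real.sqrt r + A) ≤ s₀*‖a‖ := by
        rw [habs_a]
        have h2a := mul_le_mul_of_nonneg_left hB1 hμp.le
        have := mul_le_mul_of_nonneg_left h2a hs₀0.le
        calc s₀*(μp*c₂)*(Real.sqrt r + A) = s₀*(μp*(c₂*(Real.sqrt r + A))) := by ring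
          _ ≤ s₀*(μp*‖(Bgen μp γ1p lam A)‖) := this
      have h3 : s₀*‖a‖ ≤ s₀*(‖a‖ + ‖b‖) := by
        apply mul_le_mul_of_nonneg_left _ hs₀0.le
        linarith [norm_nonneg b]
      calc c*(Real.sqrt r + A) ≤ s₀*(‖a‖ + ‖b‖) := by linarith
        _ ≤ ‖(a + b)‖ := hsum
    · have h4 : ‖(a+b)‖ ≤ ‖a‖ + ‖b‖ := norm_add_le _ _
      have h5 : ‖a‖ + ‖b‖ ≤ (μp*C₂ + μm*C₃)*(Real.sqrt r + A) := by
        rw [habs_a, habs_b]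
        have e1 := mul_le_mul_of_nonneg_left hB2 hμp.le
        have e2 := mul_le_mul_of_nonneg_left hB2' hμm.le
        linarith [e1, e2]
      calc ‖(a + b)‖ ≤ (μp*C₂ + μm*C₃)*(Real.sqrt r + A) := by linarith
        _ ≤ C*(Real.sqrt r + A) := mul_le_mul_of_nonneg_right hCge5 hrA.le


end
end

section
/- Let ν, a, λ0 > 0 and 0 < ε < π/2. Let λ ∈ ℂ \ {0} satisfy |arg λ| ≤ π − ε, |λ| ≥ λ0, and (Re λ + a/ν + ε)² + (Im λ)² ≥ (a/ν + ε)², and set δ = a/λ. Suppose X and Y are nonnegative real numbers with (Im λ)·X + (Im δ)·Y = 0 and (Re λ)·X + (ν + Re δ)·Y ≤ 0. Then X = 0 and Y = 0. -/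
open Complex Real

noncomputable section

set_option maxHeartbeats 1000000

/-- Algebraic core of the uniqueness argument in parameter
case (C1): `δ = a/λ` with `λ` in the truncated sector intersected with `K_ε`. -/
theorem statement10 (ν a lam0 ε : ℝ)
    (hν : 0 < ν) (ha : 0 < a) (hl0 : 0 < lam0) (hε0 : 0 < ε) (hεπ : ε < π / 2)
    (lam : ℂ) (hne : lam ≠ 0) (harg : |lam.arg| ≤ π - ε)
    (habs : lam0 ≤ ‖lam‖)
    (hK : (a / ν + ε) ^ 2 ≤ (lam.re + a / ν + ε) ^ 2 + lam.im ^ 2)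
    (X Y : ℝ) (hX : 0 ≤ X) (hY : 0 ≤ Y)
    (h1 : lam.im * X + ((a : ℂ) / lam).im * Y = 0)
    (h2 : lam.re * X + (ν + ((a : ℂ) / lam).re) * Y ≤ 0) :
    X = 0 ∧ Y = 0 := by
  have hs : 0 < Complex.normSq lam := Complex.normSq_pos.mpr hne
  set s := Complex.normSq lam with hsdef
  have hsx : s = lam.re ^ 2 + lam.im ^ 2 := by
    rw [hsdef, Complex.normSq_apply]; ring
  clear_value s
  have hre : ((a : ℂ) / lam).re = a * lam.re / s := by
    rw [Complex.div_re]; simp [hsdef]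
  have him : ((a : ℂ) / lam).im = -(a * lam.im / s) := by
    rw [Complex.div_im]; simp [hsdef]
  rw [him] at h1
  rw [hre] at h2
  by_cases hy : lam.im = 0
  · -- real case: lam.re > 0
    have hx : 0 < lam.re := by
      rcases lt_trichotomy lam.re 0 with h | h | h
      · exfalso
        have hpi : lam.arg = π := Complex.arg_eq_pi_iff.mpr ⟨h, hy⟩
        rw [hpi, abs_of_pos Real.pi_pos] at harg
        linarith
      · exact absurd (Complex.ext (by simpa using h) (by simpa using hy)) hne
      · exact h
    have ht : 0 < a * lam.re / s := by positivity
    constructor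
    · nlinarith [mul_nonneg hx.le hX, mul_nonneg (by linarith : (0:ℝ) ≤ ν + a * lam.re / s) hY]
    · nlinarith [mul_nonneg hx.le hX, mul_nonneg (by linarith : (0:ℝ) ≤ ν + a * lam.re / s) hY]
  · -- y ≠ 0 case
    have h1' : (lam.im * X + -(a * lam.im / s) * Y) * s = lam.im * (X * s - a * Y) := by
      field_simp; ring
    rw [h1, zero_mul] at h1'
    have hXY : X * s = a * Y := by
      rcases mul_eq_zero.mp h1'.symm with h | h
      · exact absurd h hy
      · linarith
    -- h2 scaled by s
    have h2eq : (lam.re * X + (ν + a * lam.re / s) * Y) * s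
        = lam.re * (X * s) + (ν * s + a * lam.re) * Y := by
      field_simp
    have h2s : lam.re * (X * s) + (ν * s + a * lam.re) * Y ≤ 0 := by
      rw [← h2eq]
      exact mul_nonpos_of_nonpos_of_nonneg h2 hs.le
    have hXs : lam.re * (X * s) = lam.re * (a * Y) := by rw [hXY]
    have h2Y : (ν * s + 2 * a * lam.re) * Y ≤ 0 := by linarith [h2s, hXs]
    -- positivity of coefficient
    have hK' : 0 ≤ s + 2 * lam.re * (a / ν + ε) := by nlinarith [hK, hsx]
    have hc : ν * (a / ν + ε) = a + ν * ε := by field_simp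
    have hc2 : 2 * lam.re * (ν * (a / ν + ε)) = 2 * lam.re * (a + ν * ε) := by rw [hc]
    have hKν : 0 ≤ ν * s + 2 * lam.re * (a + ν * ε) := by
      have h := mul_le_mul_of_nonneg_left hK' hν.le
      nlinarith [h, hc2]
    have hpos : 0 < ν * s + 2 * a * lam.re := by
      rcases le_or_gt 0 lam.re with h | h
      · nlinarith [mul_pos hν hs, mul_nonneg ha.le h]
      · nlinarith [hKν, mul_pos (mul_pos hν hε0) (neg_pos.mpr h)]
    have hY0 : Y = 0 := by
      have : Y ≤ 0 := by nlinarith [h2Y, hpos]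
      linarith
    have hX0 : X = 0 := by
      have : X * s = 0 := by rw [hXY, hY0, mul_zero]
      exact (mul_eq_zero.mp this).resolve_right hs.ne'
    exact ⟨hX0, hY0⟩

end
end

section
/- Let ν, λ0 > 0 and 0 < ε < π/2. Let δ ∈ ℂ \ {0} satisfy |arg δ| ≤ π − ε and Re δ < 0 (these hypotheses force Im δ ≠ 0), and let λ ∈ ℂ satisfy |λ| ≥ λ0 and Re λ ≥ |Re δ / Im δ| · |Im λ|. Suppose X and Y are nonnegative real numbers with (Im λ)·X + (Im δ)·Y = 0 and (Re λ)·X + (ν + Re δ)·Y ≤ 0. Then X = 0 and Y = 0. -/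
open Complex Real

noncomputable section

/-- Algebraic core of the uniqueness argument in parameter
case (C2): `δ` in the sector with `Re δ < 0`, and `Re λ ≥ |Re δ/Im δ|·|Im λ|`. -/
theorem statement11 (ν lam0 ε : ℝ)
    (hν : 0 < ν) (hl0 : 0 < lam0) (hε0 : 0 < ε) (hεπ : ε < π / 2)
    (δ lam : ℂ) (hδne : δ ≠ 0) (hargδ : |δ.arg| ≤ π - ε) (hδre : δ.re < 0)
    (habs : lam0 ≤ ‖lam‖)
    (hRe : |δ.re / δ.im| * |lam.im| ≤ lam.re)
    (X Y : ℝ) (hX : 0 ≤ X) (hY : 0 ≤ Y)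
    (h1 : lam.im * X + δ.im * Y = 0)
    (h2 : lam.re * X + (ν + δ.re) * Y ≤ 0) :
    X = 0 ∧ Y = 0 := by
  -- Im δ ≠ 0
  have hδim : δ.im ≠ 0 := by
    intro h
    have : δ.arg = π := Complex.arg_eq_pi_iff.2 ⟨hδre, h⟩
    rw [this] at hargδ
    have := abs_le.1 hargδ
    linarith [this.2]
  have hlre : 0 ≤ lam.re :=
    le_trans (mul_nonneg (abs_nonneg _) (abs_nonneg _)) hRe
  -- key: lam.re * X ≥ -δ.re * Y
  have hkey : -δ.re * Y ≤ lam.re * X := by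
    have h1' : lam.im * X = -(δ.im * Y) := by linarith
    have habsX : |δ.re / δ.im| * |lam.im| * X ≤ lam.re * X :=
      mul_le_mul_of_nonneg_right hRe hX
    have : |δ.re / δ.im| * |lam.im| * X = |δ.re / δ.im| * |lam.im * X| := by
      rw [abs_mul]
      rw [_root_.abs_of_nonneg hX]
      ring
    rw [this, h1', abs_neg, abs_mul, _root_.abs_of_nonneg hY, abs_div] at habsX
    have : |δ.re / δ.im| * (|δ.im| * Y) = |δ.re| * Y := by
      rw [abs_div]
      field_simp
    rw [abs_div, _root_.abs_of_neg hδre] at this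
    calc -δ.re * Y = |δ.re| / |δ.im| * (|δ.im| * Y) := by
            rw [_root_.abs_of_neg hδre]
            field_simp
      _ ≤ lam.re * X := habsX
  have hY0 : Y = 0 := by
    nlinarith
  refine ⟨?_, hY0⟩
  by_contra hX0
  have hXpos : 0 < X := lt_of_le_of_ne hX (Ne.symm hX0)
  have him : lam.im = 0 := by
    rw [hY0] at h1
    simpa [hX0] using (mul_eq_zero.1 (by linarith : lam.im * X = 0))
  have hre0 : lam.re = 0 := by
    rw [hY0] at h2
    nlinarith
  have : lam = 0 := Complex.ext hre0 him
  rw [this] at habs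
  simp at habs
  linarith

end
end

section
/- Let N ≥ 2 and let F, G : ℝ^N → ℝ^N be maps that are (Fréchet) differentiable at every point of the hyperplane H = {y ∈ ℝ^N : y_N = 0} and satisfy F(y) = G(y) for all y ∈ H. For a map X differentiable at y, let J_X(y) denote the Jacobian matrix with entries (J_X(y))_{ij} = ∂X_i/∂y_j, and for an N×N matrix M let Cof(M) denote its cofactor matrix, Cof(M)_{ij} = (−1)^{i+j} det(M with row i and column j deleted) (equivalently, Cof(M) is the transpose of the adjugate of M). Then for every y ∈ H, Cof(J_F(y))·e_N = Cof(J_G(y))·e_N, where e_N = (0,…,0,1)ᵀ ∈ ℝ^N. -/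
open Matrix

noncomputable section

/-- The Jacobian matrix `(J_X(y))_{ij} = ∂X_i/∂y_j` of a map `X : ℝ^N → ℝ^N`. -/
def jacM (N : ℕ) (F : (Fin N → ℝ) → (Fin N → ℝ)) (y : Fin N → ℝ) :
    Matrix (Fin N) (Fin N) ℝ :=
  fun i j => fderiv ℝ F y (Pi.single j 1) i

/-- The cofactor matrix `Cof(M)_{ij} = (−1)^{i+j} det(M` with row `i`, column `j` deleted`)`,
i.e. the transpose of the adjugate. -/
def cof {N : ℕ} (M : Matrix (Fin N) (Fin N) ℝ) : Matrix (Fin N) (Fin N) ℝ :=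
  (Matrix.adjugate M)ᵀ

/-- Tangential derivatives of two maps agreeing on the hyperplane `{y : y n = 0}` coincide. -/
lemma tangential_deriv_eq {N : ℕ} (n : Fin N)
    (F G : (Fin N → ℝ) → (Fin N → ℝ))
    (hFG : ∀ z : Fin N → ℝ, z n = 0 → F z = G z)
    (y : Fin N → ℝ) (hy : y n = 0)
    (hF : DifferentiableAt ℝ F y) (hG : DifferentiableAt ℝ G y)
    (j : Fin N) (hj : j ≠ n) :
    fderiv ℝ F y (Pi.single j 1) = fderiv ℝ G y (Pi.single j 1) := by
  set v : Fin N → ℝ := Pi.single j 1 with hv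
  have hγ : HasDerivAt (fun t : ℝ => y + t • v) v 0 := by
    simpa using ((hasDerivAt_id (0 : ℝ)).smul_const v).const_add y
  have hmem : ∀ t : ℝ, (y + t • v) n = 0 := by
    intro t
    simp [hv, Pi.single_apply, hj, hy]
  have h1 : HasDerivAt (fun t : ℝ => F (y + t • v)) (fderiv ℝ F y v) 0 :=
    HasFDerivAt.comp_hasDerivAt (0 : ℝ)
      (show HasFDerivAt F (fderiv ℝ F y) (y + (0 : ℝ) • v) by simpa using hF.hasFDerivAt) hγ
  have h2 : HasDerivAt (fun t : ℝ => G (y + t • v)) (fderiv ℝ G y v) 0 :=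
    HasFDerivAt.comp_hasDerivAt (0 : ℝ)
      (show HasFDerivAt G (fderiv ℝ G y) (y + (0 : ℝ) • v) by simpa using hG.hasFDerivAt) hγ
  have heq : (fun t : ℝ => F (y + t • v)) = fun t : ℝ => G (y + t • v) := by
    funext t; exact hFG _ (hmem t)
  rw [heq] at h1
  exact h1.unique h2

/-- If `F` and `G` are differentiable at every point of the hyperplane
`H = {y : y_N = 0}` and agree on `H`, then `Cof(J_F(y))·e_N = Cof(J_G(y))·e_N` on `H`. -/
theorem statement13 (N : ℕ) (hN : 2 ≤ N)
    (F G : (Fin N → ℝ) → (Fin N → ℝ))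
    (hF : ∀ y : Fin N → ℝ, y ⟨N - 1, by omega⟩ = 0 → DifferentiableAt ℝ F y)
    (hG : ∀ y : Fin N → ℝ, y ⟨N - 1, by omega⟩ = 0 → DifferentiableAt ℝ G y)
    (hFG : ∀ y : Fin N → ℝ, y ⟨N - 1, by omega⟩ = 0 → F y = G y) :
    ∀ y : Fin N → ℝ, y ⟨N - 1, by omega⟩ = 0 →
      (cof (jacM N F y)).mulVec (Pi.single ⟨N - 1, by omega⟩ 1) =
        (cof (jacM N G y)).mulVec (Pi.single ⟨N - 1, by omega⟩ 1) := by
  intro y hy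
  set n : Fin N := ⟨N - 1, by omega⟩
  -- tangential columns of the two Jacobians coincide
  have hcol : ∀ k, ∀ j ≠ n, jacM N F y k j = jacM N G y k j := by
    intro k j hj
    have := tangential_deriv_eq n F G hFG y hy (hF y hy) (hG y hy) j hj
    simp only [jacM]
    rw [this]
  funext i
  have hmv : ∀ M : Matrix (Fin N) (Fin N) ℝ,
      (cof M).mulVec (Pi.single n 1) i = (M.updateRow i (Pi.single n 1)).det := by
    intro M
    simp [cof, mulVec, dotProduct, Pi.single_apply, adjugate_apply]
  rw [hmv, hmv]
  set A : Matrix (Fin N) (Fin N) ℝ := (jacM N F y).updateRow i (Pi.single n 1) with hA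
  set B : Matrix (Fin N) (Fin N) ℝ := (jacM N G y).updateRow i (Pi.single n 1) with hB
  -- A equals B with column n replaced by A's column n
  have hAB : A = B.updateCol n (fun k => A k n) := by
    ext k j
    by_cases hjn : j = n
    · subst hjn; simp [updateCol_apply]
    · simp only [updateCol_apply, hjn, if_false]
      by_cases hk : k = i
      · subst hk; simp [hA, hB]
      · simp [hA, hB, updateRow_apply, hk, hcol k j hjn]
  have key : (B.updateCol n (fun k => A k n - B k n)).det = 0 := by
    apply det_eq_zero_of_row_eq_zero i
    intro j
    by_cases hjn : j = n
    · subst hjn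
      simp [updateCol_apply, hA, hB]
    · simp [updateCol_apply, hjn, hB, Pi.single_apply]
  have hfun : (fun k => B k n + (A k n - B k n)) = fun k => A k n := by
    funext k; ring
  calc A.det = (B.updateCol n (fun k => B k n + (A k n - B k n))).det := by
        rw [hfun, ← hAB]
    _ = (B.updateCol n (fun k => B k n)).det
          + (B.updateCol n (fun k => A k n - B k n)).det := by
        exact det_updateCol_add B n _ _
    _ = B.det := by rw [key, add_zero, updateCol_eq_self]

end
end
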